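/- arXiv:1701.04933 — 3 statements merged into one kernel-verified Lean document; each statement's English description precedes it below -/
import Mathlib

section
/- Let n ≥ 1, 1 ≤ p < ∞, and let C > 0, A > 0. Let (ν_t)_{t>0} be a family of Borel probability measures on ℝⁿ such that for each t > 0 the measure ν_t is supported in the closed Euclidean ball of radius C·t centered at 0. Suppose that for every nonnegative measurable function f : ℝⁿ → [0, ∞] and every λ > 0 one has vol{x ∈ ℝⁿ : sup_{t>0} ∫_{ℝⁿ} f(x − v) dν_t(v) > λ} ≤ A^p ‖f‖_{L^p(ℝⁿ)}^p / λ^p, where vol denotes Lebesgue measure. Then for every ℝⁿ-measure-preserving system (X, μ, π), every nonnegative measurable function f : X → [0, ∞], and every λ > 0, one has μ{x ∈ X : sup_{t>0} ∫_{ℝⁿ} f(π(v, x)) dν_t(v) > λ} ≤ A^p ‖f‖_{L^p(X, μ)}^p / λ^p. -/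
/-!
Calderón's transference argument. Fix a bound `s` on the times, so that the averages at times
`t ≤ s` only see the orbit within distance `C s`. For `R > 0` put
`F (w, x) = 1_{‖w‖ ≤ R + C s} f (π (-w) x)` on `ℝⁿ × X`. If `‖w‖ ≤ R` and `π (-w) x` lies in the
level set of the truncated ergodic maximal function, then `w` lies in the level set of the maximal
function on `ℝⁿ` of `F (·, x)`. Integrating over `w` in the ball of radius `R` (the action preserves
`μ`) and applying the hypothesis on each fibre gives
`vol (B_R) μ {M_s f > λ} λ^p ≤ A^p vol (B_{R + C s}) ‖f‖_p^p`; letting `R → ∞` removes the ratio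
of the volumes, and then `s → ∞`.

The fibrewise step needs care because the level sets of maximal functions over uncountably many
times need not be measurable, so Tonelli cannot be applied to them. The weak type bound on
`ℝⁿ × X` is proved first for functions that depend on `x` only through a measurable countable
partition of `X`, where the level set is a countable union of rectangles, and then extended to all
measurable functions by a monotone class argument.
-/

open MeasureTheory Metric Set Filter Topology
open scoped NNReal ENNReal

def IsMonotoneClass {α : Type*} (C : Set (Set α)) : Prop :=
  (∀ s : ℕ → Set α, Monotone s → (∀ n, s n ∈ C) → ⋃ n, s n ∈ C) ∧
  (∀ s : ℕ → Set α, Antitone s → (∀ n, s n ∈ C) → ⋂ n, s n ∈ C)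

namespace IsMonotoneClass

variable {α : Type*} {𝒜 C : Set (Set α)}

theorem sInter {K : Set (Set (Set α))} (hK : ∀ C ∈ K, IsMonotoneClass C) :
    IsMonotoneClass (⋂₀ K) :=
  ⟨fun s hs h C hC => (hK C hC).1 s hs fun n => h n C hC,
    fun s hs h C hC => (hK C hC).2 s hs fun n => h n C hC⟩

theorem mem_of_measurableSet_generateFrom_self (hC : IsMonotoneClass C) (hCalg : IsSetAlgebra C)
    {s : Set α} (hs : MeasurableSet[MeasurableSpace.generateFrom C] s) : s ∈ C := by
  induction s, hs using MeasurableSpace.generateFrom_induction with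
  | hC t ht _ => exact ht
  | empty => exact hCalg.empty_mem
  | compl t _ ht => exact hCalg.compl_mem ht
  | iUnion f _ hf =>
    have hacc : ∀ n, accumulate f n ∈ C := by
      intro n
      induction n with
      | zero => simpa only [accumulate_zero_nat] using hf 0
      | succ n ih => simpa only [accumulate_succ] using hCalg.union_mem ih (hf (n + 1))
    simpa only [iUnion_accumulate] using hC.1 _ monotone_accumulate hacc

theorem mem_of_measurableSet_generateFrom (h𝒜 : IsSetAlgebra 𝒜) (hC : IsMonotoneClass C)
    (h𝒜C : 𝒜 ⊆ C) {s : Set α} (hs : MeasurableSet[MeasurableSpace.generateFrom 𝒜] s) :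
    s ∈ C := by
  set M := ⋂₀ {D | IsMonotoneClass D ∧ 𝒜 ⊆ D}
  have hM : IsMonotoneClass M := sInter fun D hD => hD.1
  have h𝒜M : 𝒜 ⊆ M := fun s hs D hD => hD.2 hs
  have hMmin : ∀ D, IsMonotoneClass D → 𝒜 ⊆ D → M ⊆ D := fun D hD h𝒜D =>
    sInter_subset_of_mem ⟨hD, h𝒜D⟩
  have hcompl : ∀ s ∈ M, sᶜ ∈ M := by
    refine fun s hs => (hMmin {s | s ∈ M ∧ sᶜ ∈ M} ⟨?_, ?_⟩
      (fun s hs => ⟨h𝒜M hs, h𝒜M (h𝒜.compl_mem hs)⟩) hs).2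
    · refine fun s hs h => ⟨hM.1 s hs fun n => (h n).1, ?_⟩
      rw [compl_iUnion]
      exact hM.2 _ (fun i j hij => compl_subset_compl.2 (hs hij)) fun n => (h n).2
    · refine fun s hs h => ⟨hM.2 s hs fun n => (h n).1, ?_⟩
      rw [compl_iInter]
      exact hM.1 _ (fun i j hij => compl_subset_compl.2 (hs hij)) fun n => (h n).2
  have hinterClass : ∀ s, IsMonotoneClass {t | t ∈ M ∧ s ∩ t ∈ M} := fun s =>
    ⟨fun t ht h => ⟨hM.1 t ht fun n => (h n).1, by
        rw [inter_iUnion]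
        exact hM.1 _ (fun i j hij => inter_subset_inter_right _ (ht hij)) fun n => (h n).2⟩,
      fun t ht h => ⟨hM.2 t ht fun n => (h n).1, by
        rw [inter_iInter]
        exact hM.2 _ (fun i j hij => inter_subset_inter_right _ (ht hij)) fun n => (h n).2⟩⟩
  have hinter𝒜 : ∀ s ∈ 𝒜, ∀ t ∈ M, s ∩ t ∈ M := fun s hs t ht =>
    (hMmin _ (hinterClass s) (fun t ht => ⟨h𝒜M ht, h𝒜M (h𝒜.inter_mem hs ht)⟩) ht).2
  have hinter : ∀ s ∈ M, ∀ t ∈ M, s ∩ t ∈ M := fun s hs t ht =>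
    (hMmin _ (hinterClass s)
      (fun u hu => ⟨h𝒜M hu, inter_comm u s ▸ hinter𝒜 u hu s hs⟩) ht).2
  have hMalg : IsSetAlgebra M :=
    { empty_mem := h𝒜M h𝒜.empty_mem
      compl_mem := fun s hs => hcompl s hs
      union_mem := fun {s t} hs ht => by
        rw [← compl_compl (s ∪ t), compl_union]
        exact hcompl _ (hinter _ (hcompl s hs) _ (hcompl t ht)) }
  exact hMmin C hC h𝒜C
    (hM.mem_of_measurableSet_generateFrom_self hMalg (MeasurableSpace.generateFrom_mono h𝒜M _ hs))

end IsMonotoneClass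

section Sliced

variable {α β : Type*} [MeasurableSpace α] [MeasurableSpace β]

def IsSliced (H : α × β → ℝ≥0∞) : Prop :=
  ∃ (θ : β → ℕ) (g : ℕ → α → ℝ≥0∞), Measurable θ ∧ (∀ k, Measurable (g k)) ∧
    ∀ q, H q = g (θ q.2) q.1

theorem IsSliced.measurable {H : α × β → ℝ≥0∞} (hH : IsSliced H) : Measurable H := by
  obtain ⟨θ, g, hθ, hg, hH⟩ := hH
  have hg' : Measurable fun p : α × ℕ => g p.2 p.1 :=
    measurable_from_prod_countable_left fun k => hg k
  exact (funext hH).symm ▸ hg'.comp (measurable_fst.prodMk (hθ.comp measurable_snd))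

theorem measurableSet_of_isSliced_indicator {T : Set (α × β)} (hT : IsSliced (T.indicator 1)) :
    MeasurableSet T :=
  (measurable_indicator_const_iff (1 : ℝ≥0∞)).1 hT.measurable

theorem IsSliced.map₂ {op : ℝ≥0∞ → ℝ≥0∞ → ℝ≥0∞} (hop : Measurable (Function.uncurry op))
    {H₁ H₂ : α × β → ℝ≥0∞} (h₁ : IsSliced H₁) (h₂ : IsSliced H₂) :
    IsSliced fun q => op (H₁ q) (H₂ q) := by
  obtain ⟨θ₁, g₁, hθ₁, hg₁, hH₁⟩ := h₁
  obtain ⟨θ₂, g₂, hθ₂, hg₂, hH₂⟩ := h₂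
  refine ⟨fun x => Nat.pair (θ₁ x) (θ₂ x), fun m w => op (g₁ m.unpair.1 w) (g₂ m.unpair.2 w),
    (measurable_of_countable fun p : ℕ × ℕ => Nat.pair p.1 p.2).comp (hθ₁.prodMk hθ₂),
    fun m => hop.comp ((hg₁ _).prodMk (hg₂ _)), fun q => by simp [hH₁, hH₂]⟩

theorem isSliced_fst {g : α → ℝ≥0∞} (hg : Measurable g) : IsSliced fun q : α × β => g q.1 :=
  ⟨fun _ => 0, fun _ => g, measurable_const, fun _ => hg, fun _ => rfl⟩

theorem isSliced_zero : IsSliced (0 : α × β → ℝ≥0∞) :=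
  isSliced_fst measurable_const

theorem isSliced_indicator_snd {t : Set β} (ht : MeasurableSet t) :
    IsSliced fun q : α × β => t.indicator 1 q.2 :=
  ⟨t.indicator 1, fun k _ => k, measurable_one.indicator ht, fun _ => measurable_const,
    fun q => by by_cases hq : q.2 ∈ t <;> simp [hq]⟩

theorem isSliced_indicator_prod {s : Set α} {t : Set β} (hs : MeasurableSet s)
    (ht : MeasurableSet t) : IsSliced ((s ×ˢ t).indicator 1) := by
  have h := (isSliced_fst (β := β) (measurable_one.indicator hs)).map₂ (op := (· * ·))
    measurable_mul (isSliced_indicator_snd ht)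
  convert h using 1
  ext ⟨w, x⟩
  exact indicator_prod_one

theorem isSetAlgebra_isSliced : IsSetAlgebra {T : Set (α × β) | IsSliced (T.indicator 1)} where
  empty_mem := by
    show IsSliced _
    rw [indicator_empty]
    exact isSliced_zero
  compl_mem T hT := by
    show IsSliced _
    convert hT.map₂ (op := fun a _ => 1 - a) (by fun_prop) hT using 1
    ext q
    by_cases hq : q ∈ T <;> simp [hq]
  union_mem T S hT hS := by
    show IsSliced _
    convert hT.map₂ (op := max) measurable_sup hS using 1
    ext q
    by_cases hq : q ∈ T <;> by_cases hq' : q ∈ S <;> simp [hq, hq']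

theorem le_generateFrom_isSliced :
    (inferInstance : MeasurableSpace (α × β)) ≤
      MeasurableSpace.generateFrom {T | IsSliced (T.indicator 1)} := by
  rw [← generateFrom_prod]
  refine MeasurableSpace.generateFrom_mono ?_
  rintro _ ⟨s, hs, t, ht, rfl⟩
  exact isSliced_indicator_prod hs ht

end Sliced

section WeakType

variable {Y : Type*} [MeasurableSpace Y] {ρ : Measure Y} {p : ℝ} {A : ℝ≥0}
  {F F' G G' : Y → ℝ≥0∞}

def WeakTypeBound (ρ : Measure Y) (p : ℝ) (A : ℝ≥0) (F G : Y → ℝ≥0∞) : Prop :=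
  ∀ lam : ℝ≥0, 0 < lam →
    ρ {y | (lam : ℝ≥0∞) < F y} * (lam : ℝ≥0∞) ^ p ≤ (A : ℝ≥0∞) ^ p * ∫⁻ y, G y ^ p ∂ρ

theorem weakTypeBound_iff (hp : 0 ≤ p) :
    WeakTypeBound ρ p A F G ↔ ∀ lam : ℝ≥0, 0 < lam →
      ρ {y | (lam : ℝ≥0∞) < F y} ≤ (A : ℝ≥0∞) ^ p * (∫⁻ y, G y ^ p ∂ρ) / (lam : ℝ≥0∞) ^ p :=
  forall₂_congr fun lam hlam => (ENNReal.le_div_iff_mul_le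
    (Or.inl (ENNReal.rpow_pos (by exact_mod_cast hlam) ENNReal.coe_ne_top).ne')
    (Or.inl (ENNReal.rpow_ne_top_of_nonneg hp ENNReal.coe_ne_top))).symm

theorem WeakTypeBound.mono_left (h : WeakTypeBound ρ p A F' G) (hF : F ≤ F') :
    WeakTypeBound ρ p A F G := fun lam hlam =>
  le_trans (by gcongr; exact hF _) (h lam hlam)

theorem WeakTypeBound.mono_right (hp : 0 ≤ p) (h : WeakTypeBound ρ p A F G) (hG : G ≤ G') :
    WeakTypeBound ρ p A F G' := fun lam hlam =>
  (h lam hlam).trans (by gcongr with y; exact hG y)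

theorem WeakTypeBound.iSup_left {Fs : ℕ → Y → ℝ≥0∞} (hmono : Monotone Fs)
    (h : ∀ k, WeakTypeBound ρ p A (Fs k) G) : WeakTypeBound ρ p A (⨆ k, Fs k) G := by
  intro lam hlam
  have hlevel : {y | (lam : ℝ≥0∞) < (⨆ k, Fs k) y} = ⋃ k, {y | (lam : ℝ≥0∞) < Fs k y} := by
    ext y
    simp [lt_iSup_iff]
  rw [hlevel, Monotone.measure_iUnion fun i j hij y hy => hy.trans_le (hmono hij y),
    ENNReal.iSup_mul]
  exact iSup_le fun k => h k lam hlam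

theorem WeakTypeBound.iInf_right (hp : 0 < p) {Gs : ℕ → Y → ℝ≥0∞}
    (hm : ∀ k, Measurable (Gs k)) (hanti : Antitone Gs) (hfin : ∫⁻ y, Gs 0 y ^ p ∂ρ ≠ ∞)
    (h : ∀ k, WeakTypeBound ρ p A F (Gs k)) : WeakTypeBound ρ p A F (⨅ k, Gs k) := by
  intro lam hlam
  have hint : ∫⁻ y, (⨅ k, Gs k) y ^ p ∂ρ = ⨅ k, ∫⁻ y, Gs k y ^ p ∂ρ := by
    simp_rw [iInf_apply, ← ENNReal.orderIsoRpow_apply p hp, OrderIso.map_iInf,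
      ENNReal.orderIsoRpow_apply]
    exact lintegral_iInf (fun k => (hm k).pow_const p)
      (fun i j hij y => ENNReal.rpow_le_rpow (hanti hij y) hp.le) hfin
  rw [hint, ENNReal.mul_iInf fun h => absurd h (ENNReal.rpow_ne_top_of_nonneg hp.le
    ENNReal.coe_ne_top)]
  exact le_iInf fun k => h k lam hlam

end WeakType

section FiberMaximal

variable {E X : Type*} [MeasurableSpace E] [Sub E] {ν : ℝ → Measure E}

noncomputable def maximalFn (ν : ℝ → Measure E) (f : E → ℝ≥0∞) (w : E) : ℝ≥0∞ :=
  ⨆ (t : ℝ) (_ : 0 < t), ∫⁻ v, f (w - v) ∂ν t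

noncomputable def fiberMaximalFn (ν : ℝ → Measure E) (G : E × X → ℝ≥0∞) (q : E × X) : ℝ≥0∞ :=
  maximalFn ν (fun w => G (w, q.2)) q.1

theorem fiberMaximalFn_mono {G G' : E × X → ℝ≥0∞} (h : G ≤ G') :
    fiberMaximalFn ν G ≤ fiberMaximalFn ν G' := fun _ =>
  iSup₂_mono fun _ _ => lintegral_mono fun _ => h _

theorem fiberMaximalFn_iSup [MeasurableSub E] [MeasurableSpace X] {Gs : ℕ → E × X → ℝ≥0∞}
    (hm : ∀ k, Measurable (Gs k)) (hmono : Monotone Gs) :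
    fiberMaximalFn ν (⨆ k, Gs k) = ⨆ k, fiberMaximalFn ν (Gs k) := by
  ext q
  simp only [fiberMaximalFn, maximalFn, iSup_apply]
  rw [iSup_comm]
  refine iSup_congr fun t => ?_
  rw [iSup_comm]
  refine iSup_congr fun _ => lintegral_iSup (fun k => ?_) fun i j hij v => hmono hij _
  exact (hm k).comp ((measurable_id.const_sub q.1).prodMk measurable_const)

variable [MeasurableSpace X] {ρ : Measure (E × X)} {p : ℝ} {A : ℝ≥0}

theorem WeakTypeBound.fiberMaximalFn_iSup [MeasurableSub E] (hp : 0 ≤ p) {Gs : ℕ → E × X → ℝ≥0∞}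
    (hm : ∀ k, Measurable (Gs k)) (hmono : Monotone Gs)
    (h : ∀ k, WeakTypeBound ρ p A (fiberMaximalFn ν (Gs k)) (Gs k)) :
    WeakTypeBound ρ p A (fiberMaximalFn ν (⨆ k, Gs k)) (⨆ k, Gs k) := by
  rw [_root_.fiberMaximalFn_iSup hm hmono]
  exact .iSup_left (fun i j hij => fiberMaximalFn_mono (hmono hij)) fun k =>
    (h k).mono_right hp (le_iSup Gs k)

theorem WeakTypeBound.fiberMaximalFn_iInf (hp : 0 < p) {Gs : ℕ → E × X → ℝ≥0∞}
    (hm : ∀ k, Measurable (Gs k)) (hanti : Antitone Gs) (hfin : ∫⁻ q, Gs 0 q ^ p ∂ρ ≠ ∞)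
    (h : ∀ k, WeakTypeBound ρ p A (fiberMaximalFn ν (Gs k)) (Gs k)) :
    WeakTypeBound ρ p A (fiberMaximalFn ν (⨅ k, Gs k)) (⨅ k, Gs k) :=
  .iInf_right hp hm hanti hfin fun k => (h k).mono_left (fiberMaximalFn_mono (iInf_le Gs k))

end FiberMaximal

theorem indicator_rpow_apply {α : Type*} {p : ℝ} (hp : 0 < p) (s : Set α) (f : α → ℝ≥0∞)
    (a : α) : s.indicator f a ^ p = s.indicator (fun b => f b ^ p) a := by
  by_cases ha : a ∈ s <;> simp [ha, hp]

theorem lintegral_rpow_indicator_const_ne_top {α : Type*} [MeasurableSpace α] {μ : Measure α}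
    {p : ℝ} (hp : 0 < p) {s : Set α} (hs : MeasurableSet s) (hμs : μ s ≠ ∞) (c : ℝ≥0) :
    ∫⁻ a, s.indicator (fun _ => (c : ℝ≥0∞)) a ^ p ∂μ ≠ ∞ := by
  simp_rw [indicator_rpow_apply hp]
  rw [lintegral_indicator_const hs]
  exact ENNReal.mul_ne_top (by simp [hp.le]) hμs

theorem lintegral_rpow_add_ne_top {α : Type*} [MeasurableSpace α] {μ : Measure α} {p : ℝ}
    (hp : 0 ≤ p) {f g : α → ℝ≥0∞} (hf : Measurable f) (hf' : ∫⁻ a, f a ^ p ∂μ ≠ ∞)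
    (hg' : ∫⁻ a, g a ^ p ∂μ ≠ ∞) : ∫⁻ a, (f + g) a ^ p ∂μ ≠ ∞ := by
  refine ne_top_of_le_ne_top ?_ (lintegral_mono fun a =>
    ENNReal.rpow_add_le_mul_rpow_add_rpow' (f a) (g a) hp)
  rw [lintegral_const_mul' _ _ (ENNReal.LpAddConst_lt_top _).ne,
    lintegral_add_left (hf.pow_const p)]
  exact ENNReal.mul_ne_top (ENNReal.LpAddConst_lt_top _).ne (ENNReal.add_ne_top.2 ⟨hf', hg'⟩)

section WeakTypeSummand

variable {E X : Type*} [MeasurableSpace E] [Sub E] [MeasurableSpace X] {ρ : Measure E}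
  {μ : Measure X} {ν : ℝ → Measure E} {p : ℝ} {A : ℝ≥0}

theorem weakTypeBound_fiberMaximalFn_of_isSliced [SFinite ρ] [SFinite μ]
    (hmax : ∀ f : E → ℝ≥0∞, Measurable f → WeakTypeBound ρ p A (maximalFn ν f) f)
    {H : E × X → ℝ≥0∞} (hH : IsSliced H) :
    WeakTypeBound (ρ.prod μ) p A (fiberMaximalFn ν H) H := by
  have hHm := hH.measurable
  obtain ⟨θ, g, hθ, hg, hH⟩ := hH
  obtain rfl : H = fun q => g (θ q.2) q.1 := funext hH
  intro lam hlam
  set V : ℕ → Set E := fun k => {w | (lam : ℝ≥0∞) < maximalFn ν (g k) w}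
  have hsub : {q | (lam : ℝ≥0∞) < fiberMaximalFn ν (fun q => g (θ q.2) q.1) q} ⊆
      ⋃ k, V k ×ˢ (θ ⁻¹' {k}) := fun q hq => mem_iUnion.2 ⟨θ q.2, hq, rfl⟩
  have hint : ∫⁻ q, g (θ q.2) q.1 ^ p ∂(ρ.prod μ) =
      ∑' k, (∫⁻ w, g k w ^ p ∂ρ) * μ (θ ⁻¹' {k}) := by
    rw [lintegral_prod_symm _ (hHm.pow_const p).aemeasurable,
      ← lintegral_map (f := fun k => ∫⁻ w, g k w ^ p ∂ρ) (measurable_of_countable _) hθ,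
      lintegral_countable']
    simp_rw [Measure.map_apply hθ (measurableSet_singleton _)]
  calc (ρ.prod μ) {q | (lam : ℝ≥0∞) < fiberMaximalFn ν (fun q => g (θ q.2) q.1) q} *
        (lam : ℝ≥0∞) ^ p
      ≤ (∑' k, ρ (V k) * μ (θ ⁻¹' {k})) * (lam : ℝ≥0∞) ^ p := by
        gcongr
        exact (measure_mono hsub).trans ((measure_iUnion_le _).trans_eq (by simp))
    _ = ∑' k, ρ (V k) * (lam : ℝ≥0∞) ^ p * μ (θ ⁻¹' {k}) := by
        rw [← ENNReal.tsum_mul_right]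
        exact tsum_congr fun k => mul_right_comm _ _ _
    _ ≤ ∑' k, (A : ℝ≥0∞) ^ p * (∫⁻ w, g k w ^ p ∂ρ) * μ (θ ⁻¹' {k}) :=
        ENNReal.tsum_le_tsum fun k => mul_le_mul_left (hmax _ (hg k) lam hlam) _
    _ = (A : ℝ≥0∞) ^ p * ∫⁻ q, g (θ q.2) q.1 ^ p ∂(ρ.prod μ) := by
        rw [hint, ← ENNReal.tsum_mul_left]
        exact tsum_congr fun k => mul_assoc _ _ _

/-- The weak type bound is not additive in the function, so the monotone class argument adds
one indicator at a time to a function that stays good after adding any sliced function. -/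
def IsWeakTypeSummand (ρ : Measure (E × X)) (ν : ℝ → Measure E) (p : ℝ) (A : ℝ≥0)
    (G : E × X → ℝ≥0∞) : Prop :=
  Measurable G ∧ ∫⁻ q, G q ^ p ∂ρ ≠ ∞ ∧
    ∀ H, IsSliced H → ∫⁻ q, H q ^ p ∂ρ ≠ ∞ →
      WeakTypeBound ρ p A (fiberMaximalFn ν (H + G)) (H + G)

theorem isWeakTypeSummand_zero [SFinite ρ] [SFinite μ] (hp : 0 < p)
    (hmax : ∀ f : E → ℝ≥0∞, Measurable f → WeakTypeBound ρ p A (maximalFn ν f) f) :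
    IsWeakTypeSummand (ρ.prod μ) ν p A 0 :=
  ⟨measurable_zero, by simp [hp], fun H hH _ => by
    simpa using weakTypeBound_fiberMaximalFn_of_isSliced hmax hH⟩

namespace IsWeakTypeSummand

section

variable (hp : 0 < p) {B : Set (E × X)} (hB : IsSliced (B.indicator 1))
  (hBfin : (ρ.prod μ) B ≠ ∞) {G : E × X → ℝ≥0∞} (hG : IsWeakTypeSummand (ρ.prod μ) ν p A G)
  (c : ℝ≥0)
include hp hB hBfin hG

theorem add_indicator_of_forall {T : Set (E × X)} (hT : MeasurableSet T)
    (h : ∀ H, IsSliced H → ∫⁻ q, H q ^ p ∂(ρ.prod μ) ≠ ∞ →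
      WeakTypeBound (ρ.prod μ) p A
        (fiberMaximalFn ν (H + (G + (T ∩ B).indicator fun _ => (c : ℝ≥0∞))))
        (H + (G + (T ∩ B).indicator fun _ => (c : ℝ≥0∞)))) :
    IsWeakTypeSummand (ρ.prod μ) ν p A (G + (T ∩ B).indicator fun _ => (c : ℝ≥0∞)) :=
  ⟨hG.1.add (measurable_const.indicator (hT.inter (measurableSet_of_isSliced_indicator hB))),
    lintegral_rpow_add_ne_top hp.le hG.1 hG.2.1
      (lintegral_rpow_indicator_const_ne_top hp
        (hT.inter (measurableSet_of_isSliced_indicator hB))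
        (measure_inter_lt_top_of_right_ne_top hBfin).ne c), h⟩

theorem add_indicator_of_isSliced {T : Set (E × X)} (hT : IsSliced (T.indicator 1)) :
    IsWeakTypeSummand (ρ.prod μ) ν p A (G + (T ∩ B).indicator fun _ => (c : ℝ≥0∞)) := by
  have hTm := measurableSet_of_isSliced_indicator hT
  refine add_indicator_of_forall hp hB hBfin hG c hTm fun H hH hHfin => ?_
  have hTB : IsSliced ((T ∩ B).indicator 1) := by
    rw [inter_indicator_one]
    exact hT.map₂ measurable_mul hB
  have hH' : IsSliced (H + (T ∩ B).indicator fun _ => (c : ℝ≥0∞)) := by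
    convert hH.map₂ (op := fun a b => a + c * b) (by fun_prop) hTB using 1
    ext q
    by_cases hq : q ∈ T ∩ B <;> simp [hq]
  have h := hG.2.2 _ hH' <| lintegral_rpow_add_ne_top hp.le hH.measurable hHfin
    (lintegral_rpow_indicator_const_ne_top hp (measurableSet_of_isSliced_indicator hTB)
      (measure_inter_lt_top_of_right_ne_top hBfin).ne c)
  rwa [add_right_comm, add_assoc] at h

theorem add_indicator_iUnion [MeasurableSub E] {F : ℕ → Set (E × X)} (hF : Monotone F)
    (h : ∀ k, MeasurableSet (F k) ∧
      IsWeakTypeSummand (ρ.prod μ) ν p A (G + (F k ∩ B).indicator fun _ => (c : ℝ≥0∞))) :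
    IsWeakTypeSummand (ρ.prod μ) ν p A (G + ((⋃ k, F k) ∩ B).indicator fun _ => (c : ℝ≥0∞)) := by
  refine add_indicator_of_forall hp hB hBfin hG c (.iUnion fun k => (h k).1)
    fun H hH hHfin => ?_
  have hsup : H + (G + ((⋃ k, F k) ∩ B).indicator fun _ => (c : ℝ≥0∞)) =
      ⨆ k, H + (G + (F k ∩ B).indicator fun _ => (c : ℝ≥0∞)) := by
    ext q
    simp only [Pi.add_apply, iSup_apply, iUnion_inter, indicator_iUnion_apply (M := ℝ≥0∞) rfl,
      ENNReal.add_iSup]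
  rw [hsup]
  refine .fiberMaximalFn_iSup hp.le (fun k => hH.measurable.add (h k).2.1)
    (fun i j hij q => ?_) fun k => (h k).2.2.2 H hH hHfin
  simp only [Pi.add_apply]
  gcongr
  exact hF hij

theorem add_indicator_iInter {F : ℕ → Set (E × X)} (hF : Antitone F)
    (h : ∀ k, MeasurableSet (F k) ∧
      IsWeakTypeSummand (ρ.prod μ) ν p A (G + (F k ∩ B).indicator fun _ => (c : ℝ≥0∞))) :
    IsWeakTypeSummand (ρ.prod μ) ν p A (G + ((⋂ k, F k) ∩ B).indicator fun _ => (c : ℝ≥0∞)) := by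
  refine add_indicator_of_forall hp hB hBfin hG c (.iInter fun k => (h k).1)
    fun H hH hHfin => ?_
  have hinf : H + (G + ((⋂ k, F k) ∩ B).indicator fun _ => (c : ℝ≥0∞)) =
      ⨅ k, H + (G + (F k ∩ B).indicator fun _ => (c : ℝ≥0∞)) := by
    ext q
    simp only [Pi.add_apply, iInf_apply, iInter_inter, indicator_iInter_apply (M := ℝ≥0∞) rfl,
      ENNReal.add_iInf]
  rw [hinf]
  refine .fiberMaximalFn_iInf hp (fun k => hH.measurable.add (h k).2.1) (fun i j hij q => ?_)
    (lintegral_rpow_add_ne_top hp.le hH.measurable hHfin (h 0).2.2.1)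
    fun k => (h k).2.2.2 H hH hHfin
  simp only [Pi.add_apply]
  gcongr
  exact hF hij

theorem add_indicator [MeasurableSub E] {T : Set (E × X)} (hT : MeasurableSet T) :
    IsWeakTypeSummand (ρ.prod μ) ν p A (G + (T ∩ B).indicator fun _ => (c : ℝ≥0∞)) := by
  set 𝒞 : Set (Set (E × X)) := {T | MeasurableSet T ∧
    IsWeakTypeSummand (ρ.prod μ) ν p A (G + (T ∩ B).indicator fun _ => (c : ℝ≥0∞))}
  have h𝒞 : IsMonotoneClass 𝒞 :=
    ⟨fun F hF h => ⟨.iUnion fun k => (h k).1, add_indicator_iUnion hp hB hBfin hG c hF h⟩,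
      fun F hF h => ⟨.iInter fun k => (h k).1, add_indicator_iInter hp hB hBfin hG c hF h⟩⟩
  have hsliced : {T | IsSliced (T.indicator 1)} ⊆ 𝒞 := fun T hT =>
    ⟨measurableSet_of_isSliced_indicator hT, add_indicator_of_isSliced hp hB hBfin hG c hT⟩
  exact (h𝒞.mem_of_measurableSet_generateFrom isSetAlgebra_isSliced hsliced
    (le_generateFrom_isSliced _ hT)).2

end

theorem add_indicator_simpleFunc [MeasurableSub E] (hp : 0 < p) {B : Set (E × X)}
    (hB : IsSliced (B.indicator 1)) (hBfin : (ρ.prod μ) B ≠ ∞) (ψ : SimpleFunc (E × X) ℝ≥0) :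
    ∀ {G : E × X → ℝ≥0∞}, IsWeakTypeSummand (ρ.prod μ) ν p A G →
      IsWeakTypeSummand (ρ.prod μ) ν p A (G + B.indicator fun q => (ψ q : ℝ≥0∞)) := by
  induction ψ using SimpleFunc.induction with
  | @const c s hs =>
    intro G hG
    convert add_indicator hp hB hBfin hG c hs using 2
    ext q
    by_cases hq : q ∈ s <;> by_cases hq' : q ∈ B <;> simp [hq, hq']
  | @add f g _ hf hg =>
    intro G hG
    convert hg (hf hG) using 1
    ext q
    by_cases hq : q ∈ B <;> simp [hq, add_assoc]

end IsWeakTypeSummand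

variable [MeasurableSub E]

theorem weakTypeBound_fiberMaximalFn_indicator [SFinite ρ] [SFinite μ] (hp : 0 < p)
    (hmax : ∀ f : E → ℝ≥0∞, Measurable f → WeakTypeBound ρ p A (maximalFn ν f) f)
    {B : Set (E × X)} (hB : IsSliced (B.indicator 1)) (hBfin : (ρ.prod μ) B ≠ ∞)
    {G : E × X → ℝ≥0∞} (hG : Measurable G) :
    WeakTypeBound (ρ.prod μ) p A (fiberMaximalFn ν (B.indicator G)) (B.indicator G) := by
  set ψ : ℕ → SimpleFunc (E × X) ℝ≥0 := fun k => (SimpleFunc.eapprox G k).map ENNReal.toNNReal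
  have hψ : ∀ k q, (ψ k q : ℝ≥0∞) = SimpleFunc.eapprox G k q := fun k q =>
    ENNReal.coe_toNNReal (SimpleFunc.eapprox_lt_top G k q).ne
  have hsup : B.indicator G = ⨆ k, B.indicator fun q => (ψ k q : ℝ≥0∞) := by
    ext q
    by_cases hq : q ∈ B <;> simp [hq, hψ, SimpleFunc.iSup_eapprox_apply hG]
  rw [hsup]
  refine .fiberMaximalFn_iSup hp.le (fun k => (SimpleFunc.measurable _).coe_nnreal_ennreal.indicator
    (measurableSet_of_isSliced_indicator hB)) (fun i j hij q => ?_) fun k => ?_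
  · simp only [hψ]
    gcongr
    exact SimpleFunc.monotone_eapprox G hij q
  · simpa using (IsWeakTypeSummand.add_indicator_simpleFunc hp hB hBfin (ψ k)
      (isWeakTypeSummand_zero hp hmax)).2.2 0 isSliced_zero (by simp [hp])

theorem weakTypeBound_fiberMaximalFn [SigmaFinite ρ] [SigmaFinite μ] (hp : 0 < p)
    (hmax : ∀ f : E → ℝ≥0∞, Measurable f → WeakTypeBound ρ p A (maximalFn ν f) f)
    {G : E × X → ℝ≥0∞} (hG : Measurable G) :
    WeakTypeBound (ρ.prod μ) p A (fiberMaximalFn ν G) G := by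
  set B : ℕ → Set (E × X) := fun J => spanningSets ρ J ×ˢ spanningSets μ J
  have hB : Monotone B := fun i j hij => prod_mono (monotone_spanningSets ρ hij)
    (monotone_spanningSets μ hij)
  have hsup : G = ⨆ J, (B J).indicator G := by
    rw [iSup_indicator rfl (fun _ _ _ => le_rfl) hB, iUnion_prod_of_monotone
      (monotone_spanningSets ρ) (monotone_spanningSets μ)]
    simp
  rw [hsup]
  refine .fiberMaximalFn_iSup hp.le (fun J => hG.indicator ((measurableSet_spanningSets ρ J).prod
    (measurableSet_spanningSets μ J))) (fun i j hij => indicator_le_indicator_of_subset (hB hij)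
    (fun _ => zero_le)) fun J => weakTypeBound_fiberMaximalFn_indicator hp hmax
    (isSliced_indicator_prod (measurableSet_spanningSets ρ J) (measurableSet_spanningSets μ J))
    ?_ hG
  rw [Measure.prod_prod]
  exact ENNReal.mul_ne_top (measure_spanningSets_lt_top ρ J).ne (measure_spanningSets_lt_top μ J).ne

end WeakTypeSummand

theorem lintegral_measure_prodMk_le {α β : Type*} [MeasurableSpace α] [MeasurableSpace β]
    (μ : Measure α) (ν : Measure β) [SFinite ν] (T : Set (α × β)) :
    ∫⁻ a, ν (Prod.mk a ⁻¹' T) ∂μ ≤ μ.prod ν T := by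
  rw [← measure_toMeasurable T, Measure.prod_apply (measurableSet_toMeasurable _ _)]
  exact lintegral_mono fun a => measure_mono (preimage_mono (subset_toMeasurable _ _))

theorem le_of_forall_measure_closedBall_mul_le {E : Type*} [NormedAddCommGroup E]
    [NormedSpace ℝ E] [FiniteDimensional ℝ E] [MeasurableSpace E] [BorelSpace E]
    (ρ : Measure E) [ρ.IsAddHaarMeasure] {a b : ℝ≥0∞} {r : ℝ} (hr : 0 ≤ r)
    (h : ∀ R : ℝ, 0 < R → ρ (closedBall 0 R) * a ≤ ρ (closedBall 0 (R + r)) * b) : a ≤ b := by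
  -- `ρ (closedBall 0 (R + r)) = (1 + r / R) ^ d * ρ (closedBall 0 R)` with `d = finrank ℝ E`
  set κ : ℕ → ℝ := fun k => 1 + r * (1 / ((k : ℝ) + 1))
  have hκ : ∀ k, a ≤ ENNReal.ofReal (κ k ^ Module.finrank ℝ E) * b := by
    intro k
    have hR : (0 : ℝ) < k + 1 := by positivity
    have hball : ρ (closedBall 0 ((k + 1 : ℝ) + r)) =
        ENNReal.ofReal (κ k ^ Module.finrank ℝ E) * ρ (closedBall 0 (k + 1)) := by
      rw [← Measure.addHaar_closedBall_mul ρ 0 (by positivity) hR.le]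
      congr 2
      simp only [κ]
      field_simp
    have h0 := h _ hR
    rw [hball, mul_assoc, mul_left_comm] at h0
    exact (ENNReal.mul_le_mul_iff_right (measure_closedBall_pos ρ 0 hR).ne'
      measure_closedBall_lt_top.ne).1 h0
  have hlim : Tendsto (fun k => ENNReal.ofReal (κ k ^ Module.finrank ℝ E) * b) atTop
      (𝓝 (1 * b)) := by
    refine ENNReal.Tendsto.mul_const ?_ (Or.inl one_ne_zero)
    have := ((tendsto_one_div_add_atTop_nhds_zero_nat.const_mul r).const_add 1).pow
      (Module.finrank ℝ E)
    simpa [κ, Function.comp_def] using (ENNReal.continuous_ofReal.tendsto _).comp this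
  exact one_mul b ▸ ge_of_tendsto' hlim hκ

section FlowMaximal

variable {E X : Type*} [MeasurableSpace E] {ν : ℝ → Measure E} {π : E → X → X}

noncomputable def flowMaximalFn (ν : ℝ → Measure E) (π : E → X → X) (S : Set ℝ)
    (f : X → ℝ≥0∞) (x : X) : ℝ≥0∞ :=
  ⨆ t ∈ S, ∫⁻ v, f (π v x) ∂ν t

theorem flowMaximalFn_mono {S S' : Set ℝ} (hS : S ⊆ S') (f : X → ℝ≥0∞) :
    flowMaximalFn ν π S f ≤ flowMaximalFn ν π S' f := fun _ =>
  biSup_mono fun _ ht => hS ht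

theorem flowMaximalFn_Ioi_eq_iSup (f : X → ℝ≥0∞) :
    flowMaximalFn ν π (Ioi 0) f = ⨆ m : ℕ, flowMaximalFn ν π (Ioc 0 m) f := by
  have hIoi : Ioi (0 : ℝ) = ⋃ m : ℕ, Ioc 0 (m : ℝ) := by
    ext t
    simpa using fun _ => exists_nat_ge t
  ext x
  simp only [flowMaximalFn, iSup_apply, hIoi, iSup_iUnion]

end FlowMaximal

structure IsMeasurePreservingAction {E X : Type*} [AddGroup E] [MeasurableSpace E]
    [MeasurableSpace X] (π : E → X → X) (μ : Measure X) : Prop where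
  measurable : Measurable fun q : E × X => π q.1 q.2
  map_zero : ∀ x, π 0 x = x
  map_add : ∀ u v x, π (u + v) x = π u (π v x)
  measurePreserving : ∀ v, MeasurePreserving (π v) μ μ

namespace IsMeasurePreservingAction

variable {E X : Type*} [AddGroup E] [MeasurableSpace E] [MeasurableSpace X] {π : E → X → X}
  {μ : Measure X}

theorem measurable_apply (h : IsMeasurePreservingAction π μ) (v : E) : Measurable (π v) :=
  h.measurable.comp measurable_prodMk_left

def measurableEquiv (h : IsMeasurePreservingAction π μ) (v : E) : X ≃ᵐ X where
  toFun := π v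
  invFun := π (-v)
  left_inv x := by rw [← h.map_add, neg_add_cancel, h.map_zero]
  right_inv x := by rw [← h.map_add, add_neg_cancel, h.map_zero]
  measurable_toFun := h.measurable_apply v
  measurable_invFun := h.measurable_apply (-v)

theorem measure_preimage (h : IsMeasurePreservingAction π μ) (v : E) (s : Set X) :
    μ (π v ⁻¹' s) = μ s :=
  MeasurePreserving.measure_preimage_equiv (f := h.measurableEquiv v) (h.measurePreserving v) s

theorem measure_mul_measure_le_prod [SFinite μ] (h : IsMeasurePreservingAction π μ)
    (ρ : Measure E) {K : Set E} (hK : MeasurableSet K) (s : Set X) :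
    ρ K * μ s ≤ (ρ.prod μ) {q | q.1 ∈ K ∧ π (-q.1) q.2 ∈ s} := by
  calc ρ K * μ s = ∫⁻ w, K.indicator (fun _ => μ s) w ∂ρ := by
        rw [lintegral_indicator_const hK, mul_comm]
    _ = ∫⁻ w, μ (Prod.mk w ⁻¹' {q | q.1 ∈ K ∧ π (-q.1) q.2 ∈ s}) ∂ρ := by
        refine lintegral_congr fun w => ?_
        by_cases hw : w ∈ K
        · have hslice : Prod.mk w ⁻¹' {q : E × X | q.1 ∈ K ∧ π (-q.1) q.2 ∈ s} = π (-w) ⁻¹' s := by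
            ext x
            simp [hw]
          rw [indicator_of_mem hw, hslice, h.measure_preimage]
        · simp [hw]
    _ ≤ _ := lintegral_measure_prodMk_le ρ μ _

end IsMeasurePreservingAction

section Transference

variable {E X : Type*} [NormedAddCommGroup E] [MeasurableSpace E] [MeasurableSpace X]
  {π : E → X → X} {μ : Measure X} {ν : ℝ → Measure E}

noncomputable def flowWindow (π : E → X → X) (K : Set E) (f : X → ℝ≥0∞) : E × X → ℝ≥0∞ :=
  (Prod.fst ⁻¹' K).indicator fun q => f (π (-q.1) q.2)

theorem flowMaximalFn_le_fiberMaximalFn (h : IsMeasurePreservingAction π μ) {S : Set ℝ}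
    (hS : S ⊆ Ioi 0) {r : ℝ} (hsupp : ∀ t ∈ S, ∀ᵐ v ∂ν t, ‖v‖ ≤ r) (f : X → ℝ≥0∞) {R : ℝ}
    {w : E} (hw : w ∈ closedBall 0 R) (x : X) :
    flowMaximalFn ν π S f (π (-w) x) ≤
      fiberMaximalFn ν (flowWindow π (closedBall 0 (R + r)) f) (w, x) := by
  refine iSup₂_le fun t ht => le_iSup₂_of_le t (hS ht) (le_of_eq (lintegral_congr_ae ?_))
  filter_upwards [hsupp t ht] with v hv
  have hmem : w - v ∈ closedBall (0 : E) (R + r) := by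
    rw [mem_closedBall_zero_iff] at hw ⊢
    exact (norm_sub_le w v).trans (add_le_add hw hv)
  rw [flowWindow, indicator_of_mem (show (w - v, x) ∈ Prod.fst ⁻¹' closedBall 0 (R + r) from hmem),
    neg_sub, sub_eq_add_neg, h.map_add]

theorem IsMeasurePreservingAction.measurable_flowWindow [BorelSpace E]
    (h : IsMeasurePreservingAction π μ) {K : Set E} (hK : MeasurableSet K) {g : X → ℝ≥0∞} (hg : Measurable g) :
    Measurable (flowWindow π K g) :=
  (hg.comp (h.measurable.comp (measurable_fst.neg.prodMk measurable_snd))).indicator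
    (measurable_fst hK)

theorem lintegral_flowWindow [BorelSpace E] [SFinite μ] (h : IsMeasurePreservingAction π μ)
    (ρ : Measure E) [SFinite ρ] {K : Set E} (hK : MeasurableSet K) {g : X → ℝ≥0∞}
    (hg : Measurable g) :
    ∫⁻ q, flowWindow π K g q ∂(ρ.prod μ) = ρ K * ∫⁻ x, g x ∂μ := by
  have hslice : ∀ w, ∫⁻ x, flowWindow π K g (w, x) ∂μ = K.indicator (fun _ => ∫⁻ x, g x ∂μ) w := by
    intro w
    by_cases hw : w ∈ K
    · simp [flowWindow, hw, (h.measurePreserving (-w)).lintegral_comp hg]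
    · simp [flowWindow, hw]
  rw [lintegral_prod _ (h.measurable_flowWindow hK hg).aemeasurable]
  simp_rw [hslice]
  rw [lintegral_indicator_const hK, mul_comm]

theorem weakTypeBound_flowMaximalFn [BorelSpace E] [NormedSpace ℝ E] [FiniteDimensional ℝ E]
    [SigmaFinite μ] (h : IsMeasurePreservingAction π μ) (ρ : Measure E) [ρ.IsAddHaarMeasure]
    {p : ℝ} (hp : 0 < p) {A : ℝ≥0}
    (hmax : ∀ f : E → ℝ≥0∞, Measurable f → WeakTypeBound ρ p A (maximalFn ν f) f)
    {S : Set ℝ} (hS : S ⊆ Ioi 0) {r : ℝ} (hr : 0 ≤ r) (hsupp : ∀ t ∈ S, ∀ᵐ v ∂ν t, ‖v‖ ≤ r)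
    {f : X → ℝ≥0∞} (hf : Measurable f) : WeakTypeBound μ p A (flowMaximalFn ν π S f) f := by
  intro lam hlam
  refine le_of_forall_measure_closedBall_mul_le ρ hr fun R _ => ?_
  set F := flowWindow π (closedBall 0 (R + r)) f
  have hFp : ∀ q, F q ^ p = flowWindow π (closedBall 0 (R + r)) (fun x => f x ^ p) q :=
    fun q => indicator_rpow_apply hp _ _ q
  calc ρ (closedBall 0 R) * (μ {x | (lam : ℝ≥0∞) < flowMaximalFn ν π S f x} * (lam : ℝ≥0∞) ^ p)
      = ρ (closedBall 0 R) * μ {x | (lam : ℝ≥0∞) < flowMaximalFn ν π S f x} *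
          (lam : ℝ≥0∞) ^ p := (mul_assoc _ _ _).symm
    _ ≤ (ρ.prod μ) {q | q.1 ∈ closedBall 0 R ∧
          π (-q.1) q.2 ∈ {x | (lam : ℝ≥0∞) < flowMaximalFn ν π S f x}} * (lam : ℝ≥0∞) ^ p := by
        gcongr
        exact h.measure_mul_measure_le_prod ρ measurableSet_closedBall _
    _ ≤ (ρ.prod μ) {q | (lam : ℝ≥0∞) < fiberMaximalFn ν F q} * (lam : ℝ≥0∞) ^ p := by
        refine mul_le_mul_left (measure_mono fun q hq => ?_) _
        exact hq.2.trans_le (flowMaximalFn_le_fiberMaximalFn h hS hsupp f hq.1 q.2)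
    _ ≤ (A : ℝ≥0∞) ^ p * ∫⁻ q, F q ^ p ∂(ρ.prod μ) :=
        weakTypeBound_fiberMaximalFn hp hmax (h.measurable_flowWindow measurableSet_closedBall hf)
          lam hlam
    _ = ρ (closedBall 0 (R + r)) * ((A : ℝ≥0∞) ^ p * ∫⁻ x, f x ^ p ∂μ) := by
        rw [lintegral_congr hFp, lintegral_flowWindow h ρ measurableSet_closedBall
          (hf.pow_const p)]
        ring

end Transference

theorem transference_weak_type_general
    (n : ℕ) (p : ℝ) (hp : 1 ≤ p) (C : ℝ) (hC : 0 < C) (A : ℝ≥0)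
    (ν : ℝ → Measure (EuclideanSpace ℝ (Fin n)))
    (hsupp : ∀ t : ℝ, 0 < t → ν t (closedBall (0 : EuclideanSpace ℝ (Fin n)) (C * t))ᶜ = 0)
    (hmax : ∀ f : EuclideanSpace ℝ (Fin n) → ℝ≥0∞, Measurable f → ∀ lam : ℝ≥0, 0 < lam →
      volume {x : EuclideanSpace ℝ (Fin n) |
          (lam : ℝ≥0∞) < ⨆ (t : ℝ) (_ : 0 < t), ∫⁻ v, f (x - v) ∂(ν t)} ≤
        (A : ℝ≥0∞) ^ p * (∫⁻ x, f x ^ p ∂volume) / (lam : ℝ≥0∞) ^ p) :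
    ∀ (X : Type) [MeasurableSpace X] (μ : Measure X), SigmaFinite μ →
      ∀ π : EuclideanSpace ℝ (Fin n) → X → X,
        Measurable (fun q : EuclideanSpace ℝ (Fin n) × X => π q.1 q.2) →
        (∀ x, π 0 x = x) →
        (∀ u v x, π (u + v) x = π u (π v x)) →
        (∀ v, MeasurePreserving (π v) μ μ) →
        ∀ f : X → ℝ≥0∞, Measurable f → ∀ lam : ℝ≥0, 0 < lam →
          μ {x : X | (lam : ℝ≥0∞) < ⨆ (t : ℝ) (_ : 0 < t), ∫⁻ v, f (π v x) ∂(ν t)} ≤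
            (A : ℝ≥0∞) ^ p * (∫⁻ x, f x ^ p ∂μ) / (lam : ℝ≥0∞) ^ p := by
  intro X _ μ _ π hπ hπ0 hπadd hπmp f hf lam hlam
  have hp0 : 0 < p := zero_lt_one.trans_le hp
  have hact : IsMeasurePreservingAction π μ := ⟨hπ, hπ0, hπadd, hπmp⟩
  have hsupp' : ∀ m : ℕ, ∀ t ∈ Ioc (0 : ℝ) m, ∀ᵐ v ∂ν t, ‖v‖ ≤ C * m := fun m t ht => by
    filter_upwards [measure_eq_zero_iff_ae_notMem.1 (hsupp t ht.1)] with v hv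
    exact (mem_closedBall_zero_iff.1 (not_not.1 hv)).trans (by gcongr; exact ht.2)
  have hWT : WeakTypeBound μ p A (flowMaximalFn ν π (Ioi 0) f) f := by
    rw [flowMaximalFn_Ioi_eq_iSup]
    exact .iSup_left (fun m m' hm => flowMaximalFn_mono (Ioc_subset_Ioc_right
        (by exact_mod_cast hm)) f) fun m => weakTypeBound_flowMaximalFn hact volume hp0
      (fun g hg => (weakTypeBound_iff hp0.le).2 (hmax g hg)) Ioc_subset_Ioi_self
      (by positivity) (hsupp' m) hf
  exact (weakTypeBound_iff hp0.le).1 hWT lam hlam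

/-- **Calderón transference principle (commutative case, weak type (p,p)).**
If the maximal operator associated to a family `(ν_t)_{t>0}` of probability measures on `ℝⁿ`,
each supported in the ball of radius `C·t`, satisfies a weak type `(p,p)` inequality on
`L^p(ℝⁿ)`, then for every `ℝⁿ`-measure-preserving system `(X, μ, π)` the corresponding
ergodic maximal operator satisfies the same weak type `(p,p)` inequality. -/
theorem transference_weak_type
    (n : ℕ) (hn : 1 ≤ n) (p : ℝ) (hp : 1 ≤ p) (C : ℝ) (hC : 0 < C) (A : ℝ≥0) (hA : 0 < A)
    (ν : ℝ → Measure (EuclideanSpace ℝ (Fin n)))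
    (hprob : ∀ t : ℝ, 0 < t → IsProbabilityMeasure (ν t))
    (hsupp : ∀ t : ℝ, 0 < t → ν t (closedBall (0 : EuclideanSpace ℝ (Fin n)) (C * t))ᶜ = 0)
    (hmax : ∀ f : EuclideanSpace ℝ (Fin n) → ℝ≥0∞, Measurable f → ∀ lam : ℝ≥0, 0 < lam →
      volume {x : EuclideanSpace ℝ (Fin n) |
          (lam : ℝ≥0∞) < ⨆ (t : ℝ) (_ : 0 < t), ∫⁻ v, f (x - v) ∂(ν t)} ≤
        (A : ℝ≥0∞) ^ p * (∫⁻ x, f x ^ p ∂volume) / (lam : ℝ≥0∞) ^ p) :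
    ∀ (X : Type) [MeasurableSpace X] (μ : Measure X), SigmaFinite μ →
      ∀ π : EuclideanSpace ℝ (Fin n) → X → X,
        Measurable (fun q : EuclideanSpace ℝ (Fin n) × X => π q.1 q.2) →
        (∀ x, π 0 x = x) →
        (∀ u v x, π (u + v) x = π u (π v x)) →
        (∀ v, MeasurePreserving (π v) μ μ) →
        ∀ f : X → ℝ≥0∞, Measurable f → ∀ lam : ℝ≥0, 0 < lam →
          μ {x : X | (lam : ℝ≥0∞) < ⨆ (t : ℝ) (_ : 0 < t), ∫⁻ v, f (π v x) ∂(ν t)} ≤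
            (A : ℝ≥0∞) ^ p * (∫⁻ x, f x ^ p ∂μ) / (lam : ℝ≥0∞) ^ p :=
  transference_weak_type_general n p hp C hC A ν hsupp hmax
end

section
/- Let n ≥ 1 and 1 < p ≤ ∞. There exists a constant C_{p,n} (depending only on p and n) such that for every ℝⁿ-measure-preserving system (X, μ, π) and every nonnegative measurable function f : X → [0, ∞], one has ‖x ↦ sup_{r>0} A_r f(x)‖_{L^p(X, μ)} ≤ C_{p,n} ‖f‖_{L^p(X, μ)}, where A_r f(x) = |B(0, r)|⁻¹ ∫_{B(0, r)} f(π(v, x)) dv. -/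
/-!
The truncated centered maximal function `M_s g(u) = sup_{0 < r ≤ s} A_r g(u)` on a
finite-dimensional space `E` with Haar measure is of weak type `(1, 1)` with constant `4 ^ dim E`
(Vitali covering, doubling), and satisfies `M_s (g + c) ≤ M_s g + c`; cutting `g` at height
`t / 2` and integrating the distribution function (Marcinkiewicz) gives the strong type `(q, q)`
bound for `q > 1`, uniformly in `s`.

Calderón transference: let `M_s^π f (x)` be the truncated maximal function of the orbit
function `v ↦ f (π v x)` at `0`. Then `M_s^π f (π u x)` is that of the orbit function at `u`,
and for `u ∈ B(0, s)` it only sees the orbit on `B(0, 2 s)`. Averaging over `u ∈ B(0, s)`,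
Tonelli and the invariance of the measure give `∫ (M_s^π f)^q ≤ 2 ^ dim E * C_q * ∫ f^q`, with
`2 ^ dim E = |B(0, 2 s)| / |B(0, s)|` and `C_q` the Euclidean constant; let `s → ∞` by monotone
convergence. For `p = ∞`, each `f ∘ π v` is `≤ ‖f‖_∞` almost everywhere, so by Tonelli almost
every orbit function is, and its ball averages are bounded by `‖f‖_∞`.
-/

open MeasureTheory Metric
open scoped NNReal ENNReal

/-- The `L^p` norm (for `p` possibly `∞`) of a `ℝ≥0∞`-valued function. -/
noncomputable def lpNormENN {X : Type*} [MeasurableSpace X] (μ : Measure X) (p : ℝ≥0∞)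
    (g : X → ℝ≥0∞) : ℝ≥0∞ :=
  if p = ∞ then essSup g μ else (∫⁻ x, g x ^ p.toReal ∂μ) ^ (1 / p.toReal)

open Set

section LayerCake

lemma lintegral_Ioo_rpow_sub_one {q : ℝ} (hq : 0 < q) {b : ℝ} (hb : 0 ≤ b) :
    ∫⁻ t in Ioo 0 b, ENNReal.ofReal (t ^ (q - 1)) = ENNReal.ofReal (b ^ q / q) := by
  have hint : IntegrableOn (fun t : ℝ => t ^ (q - 1)) (Ioc 0 b) :=
    (intervalIntegral.intervalIntegrable_rpow' (by linarith)).1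
  rw [← ofReal_integral_eq_lintegral_ofReal (hint.mono_set Ioo_subset_Ioc_self)
    ((ae_restrict_iff' measurableSet_Ioo).2 (.of_forall fun t ht => by
      exact Real.rpow_nonneg ht.1.le _)), ← integral_Ioc_eq_integral_Ioo,
    ← intervalIntegral.integral_of_le hb, integral_rpow (Or.inl (by linarith)),
    sub_add_cancel, Real.zero_rpow hq.ne', sub_zero]

lemma lintegral_Ioi_rpow_eq_top (s : ℝ) : ∫⁻ t in Ioi 0, ENNReal.ofReal (t ^ s) = ∞ := by
  by_contra h
  refine not_integrableOn_Ioi_rpow s ⟨by fun_prop, (hasFiniteIntegral_iff_ofReal ?_).2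
    (lt_top_iff_ne_top.2 h)⟩
  exact (ae_restrict_iff' measurableSet_Ioi).2 (.of_forall fun t ht => Real.rpow_nonneg
    (le_of_lt ht) _)

lemma lintegral_Ioi_indicator_rpow_sub_one {q : ℝ} (hq : 0 < q) (c : ℝ≥0∞) :
    ∫⁻ t in Ioi 0, {t : ℝ | ENNReal.ofReal t < c}.indicator
      (fun t => ENNReal.ofReal (t ^ (q - 1))) t = c ^ q / ENNReal.ofReal q := by
  rw [lintegral_indicator (measurableSet_lt ENNReal.measurable_ofReal measurable_const),
    Measure.restrict_restrict (measurableSet_lt ENNReal.measurable_ofReal measurable_const)]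
  rcases eq_or_ne c ∞ with rfl | hc
  · simp only [ENNReal.ofReal_lt_top, ofPred_true, univ_inter, lintegral_Ioi_rpow_eq_top,
      ENNReal.top_rpow_of_pos hq, ENNReal.top_div_of_ne_top ENNReal.ofReal_ne_top]
  · have hset : {t : ℝ | ENNReal.ofReal t < c} ∩ Ioi 0 = Ioo 0 c.toReal := by
      ext t
      simp only [mem_inter_iff, mem_ofPred_eq, mem_Ioi, mem_Ioo]
      exact ⟨fun h => ⟨h.2, (ENNReal.ofReal_lt_iff_lt_toReal h.2.le hc).1 h.1⟩,
        fun h => ⟨(ENNReal.ofReal_lt_iff_lt_toReal h.1.le hc).2 h.2, h.1⟩⟩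
    rw [hset, lintegral_Ioo_rpow_sub_one hq ENNReal.toReal_nonneg, ENNReal.ofReal_div_of_pos hq,
      ← ENNReal.ofReal_rpow_of_nonneg ENNReal.toReal_nonneg hq.le, ENNReal.ofReal_toReal hc]

variable {α : Type*} [MeasurableSpace α]

/-- `lintegral_rpow_eq_lintegral_meas_lt_mul` for a function that may take the value `∞`. -/
theorem lintegral_rpow_eq_lintegral_meas_lt_mul' (μ : Measure α) [SFinite μ]
    {h : α → ℝ≥0∞} (hh : Measurable h) {q : ℝ} (hq : 0 < q) :
    ∫⁻ a, h a ^ q ∂μ = ENNReal.ofReal q *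
      ∫⁻ t in Ioi 0, μ {a | ENNReal.ofReal t < h a} * ENNReal.ofReal (t ^ (q - 1)) := by
  have hslice (a : α) : h a ^ q = ENNReal.ofReal q * ∫⁻ t in Ioi 0,
      {a | ENNReal.ofReal t < h a}.indicator (fun _ => ENNReal.ofReal (t ^ (q - 1))) a := by
    change _ = _ * ∫⁻ t in Ioi 0, {t : ℝ | ENNReal.ofReal t < h a}.indicator
      (fun t => ENNReal.ofReal (t ^ (q - 1))) t
    rw [lintegral_Ioi_indicator_rpow_sub_one hq, ENNReal.mul_div_cancel] <;> simp [hq]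
  have hmeas : Measurable fun p : α × ℝ =>
      {a | ENNReal.ofReal p.2 < h a}.indicator (fun _ => ENNReal.ofReal (p.2 ^ (q - 1))) p.1 :=
    Measurable.ite (measurableSet_lt (by fun_prop) (hh.comp measurable_fst)) (by fun_prop)
      measurable_const
  simp_rw [hslice]
  rw [lintegral_const_mul' _ _ ENNReal.ofReal_ne_top, lintegral_lintegral_swap hmeas.aemeasurable]
  simp_rw [lintegral_indicator_const (measurableSet_lt measurable_const hh), mul_comm]

end LayerCake

section WeakToStrong

variable {α β : Type*} [MeasurableSpace α] [MeasurableSpace β] {μ : Measure α} {ν : Measure β}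
  {T : (α → ℝ≥0∞) → β → ℝ≥0∞} {A : ℝ≥0∞}

lemma mul_meas_add_lt_le_of_weakType_one (hT_mono : Monotone T)
    (hT_add_const : ∀ g (c : ℝ≥0∞), T (fun a => g a + c) ≤ fun b => T g b + c)
    (hT_weak : ∀ g (τ : ℝ≥0∞), τ * ν {b | τ < T g b} ≤ A * ∫⁻ a, g a ∂μ)
    (g : α → ℝ≥0∞) (c : ℝ≥0∞) :
    c * ν {b | c + c < T g b} ≤ A * ∫⁻ a, {a | c < g a}.indicator g a ∂μ := by
  set g₁ := {a | c < g a}.indicator g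
  have hsplit : T g ≤ fun b => T g₁ b + c := by
    refine (hT_mono fun a => ?_).trans (hT_add_const g₁ c)
    by_cases ha : c < g a
    · simp [g₁, ha]
    · simpa [g₁, ha] using not_lt.1 ha
  calc c * ν {b | c + c < T g b} ≤ c * ν {b | c < T g₁ b} := by
        refine mul_le_mul_right (measure_mono fun b hb => ?_) c
        by_contra h
        exact ((hsplit b).trans (add_le_add_left (not_lt.1 h) c)).not_gt hb
    _ ≤ A * ∫⁻ a, g₁ a ∂μ := hT_weak g₁ c

lemma meas_lt_mul_rpow_le_of_weakType_one (hT_mono : Monotone T)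
    (hT_add_const : ∀ g (c : ℝ≥0∞), T (fun a => g a + c) ≤ fun b => T g b + c)
    (hT_weak : ∀ g (τ : ℝ≥0∞), τ * ν {b | τ < T g b} ≤ A * ∫⁻ a, g a ∂μ)
    (g : α → ℝ≥0∞) {q t : ℝ} (ht : 0 < t) :
    ν {b | ENNReal.ofReal t < T g b} * ENNReal.ofReal (t ^ (q - 1)) ≤
      2 * A * ∫⁻ a, g a * {s : ℝ | ENNReal.ofReal s < 2 * g a}.indicator
        (fun s => ENNReal.ofReal (s ^ (q - 1 - 1))) t ∂μ := by
  set c := ENNReal.ofReal (t / 2)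
  have hcc : c + c = ENNReal.ofReal t := by
    rw [← ENNReal.ofReal_add (by positivity) (by positivity), add_halves]
  have hpow : ENNReal.ofReal (t ^ (q - 1)) = c * (2 * ENNReal.ofReal (t ^ (q - 1 - 1))) := by
    rw [← ENNReal.ofReal_ofNat, ← ENNReal.ofReal_mul zero_le_two,
      ← ENNReal.ofReal_mul (by positivity), Real.rpow_sub_one ht.ne' (q - 1)]
    congr 1
    field_simp
  have hlevel (a : α) : c < g a ↔ ENNReal.ofReal t < 2 * g a := by
    rw [← hcc, ← two_mul, ENNReal.mul_lt_mul_iff_right two_ne_zero ENNReal.ofNat_ne_top]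
  calc ν {b | ENNReal.ofReal t < T g b} * ENNReal.ofReal (t ^ (q - 1))
      = c * ν {b | c + c < T g b} * (2 * ENNReal.ofReal (t ^ (q - 1 - 1))) := by
        rw [hpow, hcc]; ring
    _ ≤ A * (∫⁻ a, {a | c < g a}.indicator g a ∂μ) * (2 * ENNReal.ofReal (t ^ (q - 1 - 1))) :=
        mul_le_mul_left (mul_meas_add_lt_le_of_weakType_one hT_mono hT_add_const hT_weak g c) _
    _ = 2 * A * ∫⁻ a, g a * {s : ℝ | ENNReal.ofReal s < 2 * g a}.indicator
          (fun s => ENNReal.ofReal (s ^ (q - 1 - 1))) t ∂μ := by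
        rw [mul_assoc, ← lintegral_mul_const' _ _ (by finiteness), mul_comm 2 A, mul_assoc,
          ← lintegral_const_mul' _ _ ENNReal.ofNat_ne_top]
        congr 1
        refine lintegral_congr fun a => ?_
        by_cases ha : c < g a
        · simp [ha, (hlevel a).1 ha, indicator_of_mem, mul_left_comm]
        · simp [ha, mt (hlevel a).2 ha]

lemma mul_two_mul_rpow_sub_one_div {q : ℝ} (hq : 1 < q) (x : ℝ≥0∞) :
    x * ((2 * x) ^ (q - 1) / ENNReal.ofReal (q - 1)) =
      ENNReal.ofReal (2 ^ (q - 1) / (q - 1)) * x ^ q := by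
  have hq1 : 0 ≤ q - 1 := by linarith
  rw [ENNReal.mul_rpow_of_nonneg _ _ hq1, ENNReal.ofReal_div_of_pos (by linarith),
    ← ENNReal.ofReal_rpow_of_nonneg zero_le_two hq1, ENNReal.ofReal_ofNat]
  calc x * (2 ^ (q - 1) * x ^ (q - 1) / ENNReal.ofReal (q - 1))
      = 2 ^ (q - 1) / ENNReal.ofReal (q - 1) * (x ^ (1 : ℝ) * x ^ (q - 1)) := by
        rw [ENNReal.rpow_one, ENNReal.mul_div_right_comm]; ring
    _ = 2 ^ (q - 1) / ENNReal.ofReal (q - 1) * x ^ q := by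
        rw [← ENNReal.rpow_add_of_nonneg _ _ zero_le_one hq1, add_sub_cancel]

/-- Marcinkiewicz interpolation between the weak type `(1, 1)` bound and the bound
`T (g + c) ≤ T g + c`: cut `g` at height `t / 2` to estimate `{T g > t}`. -/
theorem lintegral_rpow_le_of_weakType_one [SFinite μ] [SFinite ν] (hT_mono : Monotone T)
    (hT_add_const : ∀ g (c : ℝ≥0∞), T (fun a => g a + c) ≤ fun b => T g b + c)
    (hT_weak : ∀ g (τ : ℝ≥0∞), τ * ν {b | τ < T g b} ≤ A * ∫⁻ a, g a ∂μ)
    {g : α → ℝ≥0∞} (hg : Measurable g) (hTg : Measurable (T g)) {q : ℝ} (hq : 1 < q) :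
    ∫⁻ b, T g b ^ q ∂ν ≤ ENNReal.ofReal (2 ^ q * q / (q - 1)) * A * ∫⁻ a, g a ^ q ∂μ := by
  set K : ℝ → α → ℝ≥0∞ := fun t a => {s : ℝ | ENNReal.ofReal s < 2 * g a}.indicator
    (fun s => ENNReal.ofReal (s ^ (q - 1 - 1))) t
  have hK : Measurable fun p : ℝ × α => K p.1 p.2 :=
    Measurable.ite
      (measurableSet_lt (ENNReal.measurable_ofReal.comp measurable_fst)
        (measurable_const.mul (hg.comp measurable_snd)))
      (ENNReal.measurable_ofReal.comp (measurable_fst.pow_const _)) measurable_const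
  have hgK : Measurable fun p : ℝ × α => g p.2 * K p.1 p.2 := (hg.comp measurable_snd).mul hK
  have hconst : ENNReal.ofReal q * (2 * A) * ENNReal.ofReal (2 ^ (q - 1) / (q - 1)) =
      ENNReal.ofReal (2 ^ q * q / (q - 1)) * A := by
    rw [← ENNReal.ofReal_ofNat 2, mul_comm _ A, ← mul_assoc, mul_comm _ A, mul_assoc A,
      mul_assoc A, ← ENNReal.ofReal_mul (by positivity), ← ENNReal.ofReal_mul (by positivity),
      Real.rpow_sub_one two_ne_zero, mul_comm A]
    congr 2
    field_simp
  calc ∫⁻ b, T g b ^ q ∂ν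
      = ENNReal.ofReal q *
          ∫⁻ t in Ioi 0, ν {b | ENNReal.ofReal t < T g b} * ENNReal.ofReal (t ^ (q - 1)) :=
        lintegral_rpow_eq_lintegral_meas_lt_mul' ν hTg (by linarith)
    _ ≤ ENNReal.ofReal q * ∫⁻ t in Ioi 0, 2 * A * ∫⁻ a, g a * K t a ∂μ := by
        refine mul_le_mul_right (setLIntegral_mono' measurableSet_Ioi fun t ht => ?_) _
        exact meas_lt_mul_rpow_le_of_weakType_one hT_mono hT_add_const hT_weak g (mem_Ioi.1 ht)
    _ = ENNReal.ofReal q * (2 * A) * ∫⁻ a, g a * (∫⁻ t in Ioi 0, K t a) ∂μ := by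
        rw [lintegral_const_mul _ hgK.lintegral_prod_right', mul_assoc (ENNReal.ofReal q),
          lintegral_lintegral_swap hgK.aemeasurable]
        congr 2
        exact lintegral_congr fun a => lintegral_const_mul (g a)
          (hK.comp (measurable_id.prodMk measurable_const) : Measurable fun t => K t a)
    _ = ENNReal.ofReal q * (2 * A) *
          ∫⁻ a, ENNReal.ofReal (2 ^ (q - 1) / (q - 1)) * g a ^ q ∂μ := by
        simp_rw [K, lintegral_Ioi_indicator_rpow_sub_one (sub_pos.2 hq),
          mul_two_mul_rpow_sub_one_div hq]
    _ = ENNReal.ofReal (2 ^ q * q / (q - 1)) * A * ∫⁻ a, g a ^ q ∂μ := by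
        rw [lintegral_const_mul' _ _ ENNReal.ofReal_ne_top, ← mul_assoc, hconst]

end WeakToStrong

section MaximalFunction

variable {E : Type*} [MeasurableSpace E]

section Metric

variable [PseudoMetricSpace E] (μ : Measure E)

noncomputable def ballAverage (g : E → ℝ≥0∞) (u : E) (r : ℝ) : ℝ≥0∞ :=
  (μ (closedBall u r))⁻¹ * ∫⁻ v in closedBall u r, g v ∂μ

noncomputable def truncMaximalFunction (s : ℝ) (g : E → ℝ≥0∞) (u : E) : ℝ≥0∞ :=
  ⨆ (r : ℝ) (_ : r ∈ Ioc 0 s), ballAverage μ g u r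

noncomputable def maximalFunction (g : E → ℝ≥0∞) (u : E) : ℝ≥0∞ :=
  ⨆ (r : ℝ) (_ : 0 < r), ballAverage μ g u r

lemma truncMaximalFunction_mono (s : ℝ) : Monotone (truncMaximalFunction μ s) :=
  fun _ _ hg _ => iSup₂_mono fun _ _ => mul_le_mul_right (lintegral_mono fun v => hg v) _

lemma truncMaximalFunction_mono_left {s s' : ℝ} (h : s ≤ s') (g : E → ℝ≥0∞) :
    truncMaximalFunction μ s g ≤ truncMaximalFunction μ s' g :=
  fun _ => biSup_mono fun _ hr => ⟨hr.1, hr.2.trans h⟩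

lemma maximalFunction_eq_iSup_nat (g : E → ℝ≥0∞) (u : E) :
    maximalFunction μ g u = ⨆ k : ℕ, truncMaximalFunction μ (k + 1) g u := by
  refine le_antisymm (iSup₂_le fun r hr => ?_) (iSup_le fun k => biSup_mono fun _ hr => hr.1)
  obtain ⟨k, hk⟩ := exists_nat_ge r
  exact le_iSup_of_le k (le_iSup₂_of_le r ⟨hr, by linarith⟩ le_rfl)

lemma truncMaximalFunction_indicator_closedBall [OpensMeasurableSpace E] {s : ℝ}
    (g : E → ℝ≥0∞) {w u : E} (hu : u ∈ closedBall w s) :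
    truncMaximalFunction μ s ((closedBall w (2 * s)).indicator g) u =
      truncMaximalFunction μ s g u := by
  refine biSup_congr fun r hr => congrArg _ (setLIntegral_congr_fun measurableSet_closedBall
    fun v hv => indicator_of_mem (closedBall_subset_closedBall' ?_ hv) g)
  rw [mem_closedBall] at hu
  linarith [hr.2]

lemma setLIntegral_truncMaximalFunction_rpow_le [OpensMeasurableSpace E] {s q : ℝ} (hq : 0 < q)
    {C : ℝ≥0∞} (hC : ∀ g : E → ℝ≥0∞, Measurable g →
      ∫⁻ u, truncMaximalFunction μ s g u ^ q ∂μ ≤ C * ∫⁻ v, g v ^ q ∂μ)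
    {g : E → ℝ≥0∞} (hg : Measurable g) (w : E) :
    ∫⁻ u in closedBall w s, truncMaximalFunction μ s g u ^ q ∂μ ≤
      C * ∫⁻ v in closedBall w (2 * s), g v ^ q ∂μ := by
  calc ∫⁻ u in closedBall w s, truncMaximalFunction μ s g u ^ q ∂μ
      = ∫⁻ u in closedBall w s,
          truncMaximalFunction μ s ((closedBall w (2 * s)).indicator g) u ^ q ∂μ :=
        setLIntegral_congr_fun measurableSet_closedBall fun u hu => by
          rw [truncMaximalFunction_indicator_closedBall μ g hu]
    _ ≤ ∫⁻ u, truncMaximalFunction μ s ((closedBall w (2 * s)).indicator g) u ^ q ∂μ :=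
        setLIntegral_le_lintegral _ _
    _ ≤ C * ∫⁻ v, (closedBall w (2 * s)).indicator g v ^ q ∂μ :=
        hC _ (hg.indicator measurableSet_closedBall)
    _ = C * ∫⁻ v in closedBall w (2 * s), g v ^ q ∂μ := by
        rw [← lintegral_indicator measurableSet_closedBall]
        refine congrArg _ (lintegral_congr fun v => ?_)
        by_cases hv : v ∈ closedBall w (2 * s) <;> simp [hv, hq]

variable [ProperSpace E] [μ.IsOpenPosMeasure] [IsFiniteMeasureOnCompacts μ]

lemma ballAverage_le_of_ae_le {g : E → ℝ≥0∞} {c : ℝ≥0∞} (hg : ∀ᵐ v ∂μ, g v ≤ c) (u : E) {r : ℝ}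
    (hr : 0 < r) : ballAverage μ g u r ≤ c := by
  calc ballAverage μ g u r ≤ (μ (closedBall u r))⁻¹ * ∫⁻ _ in closedBall u r, c ∂μ :=
        mul_le_mul_right (lintegral_mono_ae (ae_restrict_of_ae hg)) _
    _ = c := by
        rw [setLIntegral_const, mul_comm c, ← mul_assoc, ENNReal.inv_mul_cancel
          (measure_closedBall_pos μ u hr).ne' measure_closedBall_lt_top.ne, one_mul]

lemma ballAverage_add_const (g : E → ℝ≥0∞) (c : ℝ≥0∞) (u : E) {r : ℝ} (hr : 0 < r) :
    ballAverage μ (fun v => g v + c) u r = ballAverage μ g u r + c := by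
  rw [ballAverage, ballAverage, lintegral_add_right _ measurable_const, setLIntegral_const,
    mul_add, mul_comm c, ← mul_assoc, ENNReal.inv_mul_cancel (measure_closedBall_pos μ u hr).ne'
      measure_closedBall_lt_top.ne, one_mul]

lemma truncMaximalFunction_add_const (s : ℝ) (g : E → ℝ≥0∞) (c : ℝ≥0∞) :
    truncMaximalFunction μ s (fun v => g v + c) ≤ fun u => truncMaximalFunction μ s g u + c :=
  fun u => iSup₂_le fun r hr => by
    rw [ballAverage_add_const μ g c u hr.1]
    exact add_le_add_left (le_iSup₂ (f := fun r (_ : r ∈ Ioc 0 s) => ballAverage μ g u r) r hr) c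

lemma exists_mul_measure_lt_of_lt_truncMaximalFunction {s : ℝ} {g : E → ℝ≥0∞} {u : E}
    {τ : ℝ≥0∞} (hτ : τ < truncMaximalFunction μ s g u) :
    ∃ r ∈ Ioc 0 s, τ * μ (closedBall u r) < ∫⁻ v in closedBall u r, g v ∂μ := by
  obtain ⟨r, hr⟩ := lt_iSup_iff.1 hτ
  obtain ⟨hrs, hlt⟩ := lt_iSup_iff.1 hr
  refine ⟨r, hrs, ?_⟩
  rwa [ballAverage, ← ENNReal.div_eq_inv_mul, ENNReal.lt_div_iff_mul_lt
    (.inl (measure_closedBall_pos μ u hrs.1).ne') (.inl measure_closedBall_lt_top.ne)] at hlt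

end Metric

variable [NormedAddCommGroup E] [BorelSpace E] (μ : Measure E) [μ.IsAddHaarMeasure]

lemma ballAverage_comp_add_right (g : E → ℝ≥0∞) (u w : E) (r : ℝ) :
    ballAverage μ (fun v => g (v + u)) w r = ballAverage μ g (w + u) r := by
  have hpre : (fun v => v + u) ⁻¹' closedBall (w + u) r = closedBall w r := by
    simp
  rw [ballAverage, ballAverage, Measure.addHaar_closedBall_center μ w,
    Measure.addHaar_closedBall_center μ (w + u), ← hpre,
    (measurePreserving_add_right μ u).setLIntegral_comp_preimage_emb
      (measurableEmbedding_addRight u)]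

lemma truncMaximalFunction_comp_add_right (s : ℝ) (g : E → ℝ≥0∞) (u w : E) :
    truncMaximalFunction μ s (fun v => g (v + u)) w = truncMaximalFunction μ s g (w + u) := by
  simp only [truncMaximalFunction, ballAverage_comp_add_right]

lemma truncMaximalFunction_orbit_apply {X : Type*} {π : E → X → X}
    (hadd : ∀ u v x, π (u + v) x = π u (π v x)) (f : X → ℝ≥0∞) (s : ℝ) (u : E) (x : X) :
    truncMaximalFunction μ s (fun v => f (π v (π u x))) 0 =
      truncMaximalFunction μ s (fun v => f (π v x)) u := by
  simp_rw [← hadd]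
  rw [truncMaximalFunction_comp_add_right μ s (fun v => f (π v x)), zero_add]

end MaximalFunction

section FiniteDimensional

variable {E : Type*} [MeasurableSpace E] [NormedAddCommGroup E] [NormedSpace ℝ E]
  [FiniteDimensional ℝ E] [BorelSpace E] (μ : Measure E) [μ.IsAddHaarMeasure]

-- Spheres are Haar-null, so the integral over `closedBall u r` is left-continuous in `r`.
lemma ballAverage_le_iSup_rat (g : E → ℝ≥0∞) (u : E) {r : ℝ} (hr : 0 < r) :
    ballAverage μ g u r ≤ ⨆ (q : ℚ) (_ : (q : ℝ) ∈ Ioo 0 r), ballAverage μ g u q := by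
  set S := {q : ℚ | (q : ℝ) ∈ Ioo 0 r}
  have hball : ball u r = ⋃ q ∈ S, closedBall u (q : ℝ) := by
    ext v
    simp only [mem_ball, mem_iUnion, mem_closedBall, exists_prop]
    refine ⟨fun hv => ?_, fun ⟨q, hq, hv⟩ => hv.trans_lt hq.2⟩
    obtain ⟨q, h1, h2⟩ := exists_rat_btwn hv
    exact ⟨q, ⟨dist_nonneg.trans_lt h1, h2⟩, h1.le⟩
  have hdir : DirectedOn (Function.onFun (· ⊆ ·) fun q : ℚ => closedBall u (q : ℝ)) S :=
    fun a ha b hb => ⟨max a b, by rcases max_choice a b with h | h <;> rw [h] <;> assumption,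
      closedBall_subset_closedBall (by exact_mod_cast le_max_left a b),
      closedBall_subset_closedBall (by exact_mod_cast le_max_right a b)⟩
  have hsphere : μ.withDensity g (sphere u r) = 0 :=
    withDensity_absolutelyContinuous μ g (Measure.addHaar_sphere_of_ne_zero μ u hr.ne')
  calc ballAverage μ g u r = (μ (closedBall u r))⁻¹ * μ.withDensity g (ball u r) := by
        rw [ballAverage, ← withDensity_apply _ measurableSet_closedBall, ← closedBall_sdiff_sphere,
          measure_sdiff_null hsphere]
    _ = ⨆ q ∈ S, (μ (closedBall u r))⁻¹ * μ.withDensity g (closedBall u q) := by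
        rw [hball, measure_biUnion_eq_iSup S.to_countable hdir]
        simp_rw [ENNReal.mul_iSup]
    _ ≤ ⨆ (q : ℚ) (_ : (q : ℝ) ∈ Ioo 0 r), ballAverage μ g u q := iSup₂_mono fun q hq => by
        rw [ballAverage, withDensity_apply _ measurableSet_closedBall]
        exact mul_le_mul_left
          (ENNReal.inv_le_inv.2 (measure_mono (closedBall_subset_closedBall hq.2.le))) _

lemma truncMaximalFunction_eq_iSup_rat (s : ℝ) (g : E → ℝ≥0∞) (u : E) :
    truncMaximalFunction μ s g u = ⨆ (q : ℚ) (_ : (q : ℝ) ∈ Ioc 0 s), ballAverage μ g u q :=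
  le_antisymm
    (iSup₂_le fun _ hr => (ballAverage_le_iSup_rat μ g u hr.1).trans
      (biSup_mono fun _ hq => ⟨hq.1, hq.2.le.trans hr.2⟩))
    (iSup₂_le fun q hq => le_iSup₂ (f := fun r (_ : r ∈ Ioc 0 s) => ballAverage μ g u r) q hq)

section Measurability

variable {α : Type*} [MeasurableSpace α] {F : α → E → ℝ≥0∞} {c : α → E}

lemma measurable_ballAverage (hF : Measurable (Function.uncurry F)) (hc : Measurable c) (r : ℝ) :
    Measurable fun a => ballAverage μ (F a) (c a) r := by
  have hshift : (fun a => ballAverage μ (F a) (c a) r) =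
      fun a => ballAverage μ (fun v => F a (v + c a)) 0 r :=
    funext fun a => by rw [ballAverage_comp_add_right, zero_add]
  rw [hshift]
  exact (hF.comp (measurable_fst.prodMk (measurable_snd.add (hc.comp measurable_fst))))
    |>.lintegral_prod_right' |>.const_mul _

lemma measurable_truncMaximalFunction (hF : Measurable (Function.uncurry F)) (hc : Measurable c)
    (s : ℝ) : Measurable fun a => truncMaximalFunction μ s (F a) (c a) := by
  simp_rw [truncMaximalFunction_eq_iSup_rat]
  exact .iSup fun q => .iSup fun _ => measurable_ballAverage μ hF hc q

end Measurability

lemma addHaar_closedBall_mul_radius (x : E) {c r : ℝ} (hc : 0 ≤ c) (hr : 0 ≤ r) :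
    μ (closedBall x (c * r)) = ENNReal.ofReal c ^ Module.finrank ℝ E * μ (closedBall x r) := by
  rw [Measure.addHaar_closedBall_mul μ x hc hr, ENNReal.ofReal_pow hc,
    Measure.addHaar_closedBall_center μ x]

/-- Vitali covering with enlargement factor `4`; the constant is the doubling factor of `μ`
at that scale. -/
theorem mul_meas_lt_truncMaximalFunction_le (s : ℝ) (g : E → ℝ≥0∞) (τ : ℝ≥0∞) :
    τ * μ {u | τ < truncMaximalFunction μ s g u} ≤
      4 ^ Module.finrank ℝ E * ∫⁻ v, g v ∂μ := by
  set T := {u | τ < truncMaximalFunction μ s g u}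
  choose! ρ hρs hρ using fun u (hu : u ∈ T) =>
    exists_mul_measure_lt_of_lt_truncMaximalFunction μ hu
  obtain ⟨w, hwT, hdisj, hcover⟩ := Vitali.exists_disjoint_subfamily_covering_enlargement_closedBall
    T id ρ s (fun u hu => (hρs u hu).2) 4 (by norm_num)
  simp only [id] at hdisj hcover
  have hw : w.Countable := hdisj.countable_of_nonempty_interior fun u hu =>
    ⟨u, ball_subset_interior_closedBall (mem_ball_self (hρs u (hwT hu)).1)⟩
  have hT : T ⊆ ⋃ b ∈ w, closedBall b (4 * ρ b) := fun u hu => by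
    obtain ⟨b, hb, hsub⟩ := hcover u hu
    exact mem_biUnion hb (hsub (mem_closedBall_self (hρs u hu).1.le))
  have hdouble (b : w) : μ (closedBall (b : E) (4 * ρ b)) = 4 ^ Module.finrank ℝ E *
      μ (closedBall (b : E) (ρ b)) := by
    rw [addHaar_closedBall_mul_radius μ _ zero_le_four (hρs b (hwT b.2)).1.le,
      ENNReal.ofReal_ofNat]
  have := hw.to_subtype
  calc τ * μ T ≤ τ * ∑' b : w, μ (closedBall (b : E) (4 * ρ b)) :=
        mul_le_mul_right ((measure_mono hT).trans (measure_biUnion_le μ hw _)) τ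
    _ = 4 ^ Module.finrank ℝ E * ∑' b : w, τ * μ (closedBall (b : E) (ρ b)) := by
        simp_rw [hdouble, ← ENNReal.tsum_mul_left, mul_left_comm]
    _ ≤ 4 ^ Module.finrank ℝ E * ∑' b : w, ∫⁻ v in closedBall (b : E) (ρ b), g v ∂μ :=
        mul_le_mul_right (ENNReal.tsum_le_tsum fun (b : w) => (hρ b (hwT b.2)).le) _
    _ = 4 ^ Module.finrank ℝ E * ∫⁻ v in ⋃ b ∈ w, closedBall b (ρ b), g v ∂μ := by
        rw [lintegral_biUnion hw (fun _ _ => measurableSet_closedBall) hdisj]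
    _ ≤ 4 ^ Module.finrank ℝ E * ∫⁻ v, g v ∂μ :=
        mul_le_mul_right (setLIntegral_le_lintegral _ _) _

theorem lintegral_truncMaximalFunction_rpow_le (s : ℝ) {g : E → ℝ≥0∞} (hg : Measurable g)
    {q : ℝ} (hq : 1 < q) :
    ∫⁻ u, truncMaximalFunction μ s g u ^ q ∂μ ≤
      ENNReal.ofReal (2 ^ q * q / (q - 1)) * 4 ^ Module.finrank ℝ E * ∫⁻ v, g v ^ q ∂μ :=
  lintegral_rpow_le_of_weakType_one (truncMaximalFunction_mono μ s)
    (truncMaximalFunction_add_const μ s) (mul_meas_lt_truncMaximalFunction_le μ s) hg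
    (measurable_truncMaximalFunction μ (F := fun _ => g) (hg.comp measurable_snd) measurable_id s)
    hq

section Transference

variable {X : Type*} [MeasurableSpace X] {ν : Measure X} [SFinite ν] {π : E → X → X}

lemma measurable_truncMaximalFunction_orbit (hπ : Measurable (Function.uncurry π))
    {f : X → ℝ≥0∞} (hf : Measurable f) (s : ℝ) :
    Measurable fun x => truncMaximalFunction μ s (fun v => f (π v x)) 0 :=
  measurable_truncMaximalFunction μ (F := fun x v => f (π v x)) (hf.comp (hπ.comp measurable_swap))
    measurable_const s

/-- Calderón's transference principle: average the orbit maximal function over the shifts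
`π u`, `u ∈ B(0, s)`; on each orbit it is the truncated maximal function of `f` restricted to
`B(0, 2 s)`. -/
theorem lintegral_truncMaximalFunction_orbit_rpow_le (hπ : Measurable (Function.uncurry π))
    (hadd : ∀ u v x, π (u + v) x = π u (π v x)) (hπν : ∀ v, MeasurePreserving (π v) ν ν)
    {s q : ℝ} (hs : 0 < s) (hq : 0 < q) {C : ℝ≥0∞}
    (hC : ∀ g : E → ℝ≥0∞, Measurable g →
      ∫⁻ u, truncMaximalFunction μ s g u ^ q ∂μ ≤ C * ∫⁻ v, g v ^ q ∂μ)
    {f : X → ℝ≥0∞} (hf : Measurable f) :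
    ∫⁻ x, truncMaximalFunction μ s (fun v => f (π v x)) 0 ^ q ∂ν ≤
      2 ^ Module.finrank ℝ E * C * ∫⁻ x, f x ^ q ∂ν := by
  have hh := measurable_truncMaximalFunction_orbit μ hπ hf s
  have hinv (u : E) : ∫⁻ x, truncMaximalFunction μ s (fun v => f (π v (π u x))) 0 ^ q ∂ν =
      ∫⁻ x, truncMaximalFunction μ s (fun v => f (π v x)) 0 ^ q ∂ν :=
    (hπν u).lintegral_comp (hh.pow_const q)
  have hV : (μ (closedBall (0 : E) s))⁻¹ * μ (closedBall (0 : E) s) = 1 :=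
    ENNReal.inv_mul_cancel (measure_closedBall_pos μ 0 hs).ne' measure_closedBall_lt_top.ne
  have hV2 : μ (closedBall (0 : E) (2 * s)) =
      2 ^ Module.finrank ℝ E * μ (closedBall (0 : E) s) := by
    rw [addHaar_closedBall_mul_radius μ 0 zero_le_two hs.le, ENNReal.ofReal_ofNat]
  have hπf : Measurable fun p : E × X => f (π p.1 p.2) ^ q := (hf.comp hπ).pow_const q
  calc ∫⁻ x, truncMaximalFunction μ s (fun v => f (π v x)) 0 ^ q ∂ν
      = (μ (closedBall 0 s))⁻¹ * ∫⁻ u in closedBall 0 s,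
          ∫⁻ x, truncMaximalFunction μ s (fun v => f (π v (π u x))) 0 ^ q ∂ν ∂μ := by
        simp_rw [hinv, setLIntegral_const, mul_comm _ (μ _), ← mul_assoc, hV, one_mul]
    _ = (μ (closedBall 0 s))⁻¹ * ∫⁻ x, ∫⁻ u in closedBall 0 s,
          truncMaximalFunction μ s (fun v => f (π v x)) u ^ q ∂μ ∂ν := by
        rw [lintegral_lintegral_swap ((hh.comp hπ).pow_const q).aemeasurable]
        simp_rw [truncMaximalFunction_orbit_apply μ hadd]
    _ ≤ (μ (closedBall 0 s))⁻¹ * ∫⁻ x, C * ∫⁻ v in closedBall 0 (2 * s), f (π v x) ^ q ∂μ ∂ν :=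
        mul_le_mul_right (lintegral_mono fun x => setLIntegral_truncMaximalFunction_rpow_le μ hq hC
          (hf.comp (hπ.comp (measurable_id.prodMk measurable_const))) 0) _
    _ = (μ (closedBall 0 s))⁻¹ * C * ∫⁻ v in closedBall 0 (2 * s), ∫⁻ x, f (π v x) ^ q ∂ν ∂μ := by
        have hint : Measurable fun x => ∫⁻ v in closedBall (0 : E) (2 * s), f (π v x) ^ q ∂μ :=
          (hπf.comp measurable_swap).lintegral_prod_right'
        rw [lintegral_const_mul _ hint, mul_assoc,
          lintegral_lintegral_swap (f := fun x v => f (π v x) ^ q)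
            (hπf.comp measurable_swap).aemeasurable]
    _ = 2 ^ Module.finrank ℝ E * C * ∫⁻ x, f x ^ q ∂ν := by
        simp_rw [(hπν _).lintegral_comp (hf.pow_const q), setLIntegral_const, hV2]
        calc (μ (closedBall 0 s))⁻¹ * C *
              ((∫⁻ x, f x ^ q ∂ν) * (2 ^ Module.finrank ℝ E * μ (closedBall 0 s)))
            = 2 ^ Module.finrank ℝ E * C * (∫⁻ x, f x ^ q ∂ν) *
                ((μ (closedBall 0 s))⁻¹ * μ (closedBall 0 s)) := by ring
          _ = _ := by rw [hV, mul_one]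

theorem lintegral_maximalFunction_orbit_rpow_le (hπ : Measurable (Function.uncurry π))
    (hadd : ∀ u v x, π (u + v) x = π u (π v x)) (hπν : ∀ v, MeasurePreserving (π v) ν ν)
    {f : X → ℝ≥0∞} (hf : Measurable f) {q : ℝ} (hq : 1 < q) :
    ∫⁻ x, maximalFunction μ (fun v => f (π v x)) 0 ^ q ∂ν ≤
      2 ^ Module.finrank ℝ E * (ENNReal.ofReal (2 ^ q * q / (q - 1)) * 4 ^ Module.finrank ℝ E) *
        ∫⁻ x, f x ^ q ∂ν := by
  have hq0 : 0 < q := by linarith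
  have hsup (x : X) : maximalFunction μ (fun v => f (π v x)) 0 ^ q =
      ⨆ k : ℕ, truncMaximalFunction μ (k + 1) (fun v => f (π v x)) 0 ^ q := by
    rw [maximalFunction_eq_iSup_nat]
    exact (ENNReal.orderIsoRpow q hq0).map_iSup _
  have hmono : Monotone fun (k : ℕ) x =>
      truncMaximalFunction μ (k + 1) (fun v => f (π v x)) 0 ^ q := fun k k' hk x =>
    ENNReal.rpow_le_rpow (truncMaximalFunction_mono_left μ (by simpa using hk) _ _) hq0.le
  simp_rw [hsup]
  rw [lintegral_iSup (fun k => (measurable_truncMaximalFunction_orbit μ hπ hf _).pow_const q) hmono]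
  exact iSup_le fun k => lintegral_truncMaximalFunction_orbit_rpow_le μ hπ hadd hπν
    k.cast_add_one_pos hq0 (fun g hg => lintegral_truncMaximalFunction_rpow_le μ _ hg hq) hf

end Transference

end FiniteDimensional

section EssSup

variable {E : Type*} [MeasurableSpace E] [NormedAddCommGroup E] [ProperSpace E] (μ : Measure E)
  [μ.IsOpenPosMeasure] [IsFiniteMeasureOnCompacts μ] [SFinite μ]
  {X : Type*} [MeasurableSpace X] {ν : Measure X} [SFinite ν] {π : E → X → X}

theorem essSup_maximalFunction_orbit_le (hπ : Measurable (Function.uncurry π))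
    (hπν : ∀ v, MeasurePreserving (π v) ν ν) {f : X → ℝ≥0∞} (hf : Measurable f) :
    essSup (fun x => maximalFunction μ (fun v => f (π v x)) 0) ν ≤ essSup f ν := by
  have hae : ∀ᵐ x ∂ν, ∀ᵐ v ∂μ, f (π v x) ≤ essSup f ν := by
    rw [Measure.ae_ae_comm (p := fun x v => f (π v x) ≤ essSup f ν)
      (measurableSet_le (hf.comp (hπ.comp measurable_swap)) measurable_const)]
    exact .of_forall fun v => (hπν v).quasiMeasurePreserving.ae (ENNReal.ae_le_essSup f)
  exact essSup_le_of_ae_le _ (hae.mono fun x hx =>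
    iSup₂_le fun r hr => ballAverage_le_of_ae_le μ hx 0 hr)

end EssSup

theorem wiener_maximal_ergodic_strong_general
    (n : ℕ) (p : ℝ≥0∞) (hp : 1 < p) :
    ∃ C : ℝ≥0, 0 < C ∧
      ∀ (X : Type) (_ : MeasurableSpace X) (μ : Measure X), SigmaFinite μ →
        ∀ π : EuclideanSpace ℝ (Fin n) → X → X,
          Measurable (fun q : EuclideanSpace ℝ (Fin n) × X => π q.1 q.2) →
          (∀ x, π 0 x = x) →
          (∀ u v x, π (u + v) x = π u (π v x)) →
          (∀ v, MeasurePreserving (π v) μ μ) →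
          ∀ f : X → ℝ≥0∞, Measurable f →
            lpNormENN μ p (fun x => ⨆ (r : ℝ) (_ : 0 < r),
                (volume (closedBall (0 : EuclideanSpace ℝ (Fin n)) r))⁻¹ *
                  ∫⁻ v in closedBall (0 : EuclideanSpace ℝ (Fin n)) r, f (π v x) ∂volume) ≤
              (C : ℝ≥0∞) * lpNormENN μ p f := by
  rcases eq_or_ne p ∞ with rfl | hp_top
  · refine ⟨1, one_pos, fun X _ μ _ π hπ _ _ hπμ f hf => ?_⟩
    rw [lpNormENN, lpNormENN, if_pos rfl, if_pos rfl, ENNReal.coe_one, one_mul]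
    exact essSup_maximalFunction_orbit_le volume hπ hπμ hf
  set q := p.toReal
  have hq : 1 < q := by simpa using ENNReal.toReal_strict_mono hp_top hp
  set d := Module.finrank ℝ (EuclideanSpace ℝ (Fin n))
  set K : ℝ≥0∞ := 2 ^ d * (ENNReal.ofReal (2 ^ q * q / (q - 1)) * 4 ^ d)
  have hK : K ≠ ∞ := by finiteness
  refine ⟨K.toNNReal ^ (1 / q), ?_, fun X _ μ _ π hπ _ hadd hπμ f hf => ?_⟩
  · have hK0 : K ≠ 0 := by positivity
    exact NNReal.rpow_pos (ENNReal.toNNReal_pos hK0 hK)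
  simp only [lpNormENN, if_neg hp_top]
  calc (∫⁻ x, maximalFunction volume (fun v => f (π v x)) 0 ^ q ∂μ) ^ (1 / q)
      ≤ (K * ∫⁻ x, f x ^ q ∂μ) ^ (1 / q) :=
        ENNReal.rpow_le_rpow (lintegral_maximalFunction_orbit_rpow_le volume hπ hadd hπμ hf hq)
          (by positivity)
    _ = _ := by
        rw [ENNReal.mul_rpow_of_nonneg _ _ (by positivity),
          ENNReal.coe_rpow_of_nonneg _ (by positivity), ENNReal.coe_toNNReal hK]

/-- **Wiener's maximal ergodic inequality (commutative case, strong type), `1 < p ≤ ∞`.**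
There is a constant `C = C_{p,n}` such that for every `ℝⁿ`-measure-preserving system
`(X, μ, π)` and every nonnegative measurable `f`, the maximal function of the ball averages
`A_r f(x) = |B(0,r)|⁻¹ ∫_{B(0,r)} f(π(v,x)) dv` satisfies
`‖sup_{r>0} A_r f‖_p ≤ C ‖f‖_p`. -/
theorem wiener_maximal_ergodic_strong
    (n : ℕ) (hn : 1 ≤ n) (p : ℝ≥0∞) (hp : 1 < p) :
    ∃ C : ℝ≥0, 0 < C ∧
      ∀ (X : Type) (_ : MeasurableSpace X) (μ : Measure X), SigmaFinite μ →
        ∀ π : EuclideanSpace ℝ (Fin n) → X → X,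
          Measurable (fun q : EuclideanSpace ℝ (Fin n) × X => π q.1 q.2) →
          (∀ x, π 0 x = x) →
          (∀ u v x, π (u + v) x = π u (π v x)) →
          (∀ v, MeasurePreserving (π v) μ μ) →
          ∀ f : X → ℝ≥0∞, Measurable f →
            lpNormENN μ p (fun x => ⨆ (r : ℝ) (_ : 0 < r),
                (volume (closedBall (0 : EuclideanSpace ℝ (Fin n)) r))⁻¹ *
                  ∫⁻ v in closedBall (0 : EuclideanSpace ℝ (Fin n)) r, f (π v x) ∂volume) ≤
              (C : ℝ≥0∞) * lpNormENN μ p f :=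
  wiener_maximal_ergodic_strong_general n p hp
end

section
/- Let n ≥ 1. There exists a constant C_n (depending only on n) such that for every ℝⁿ-measure-preserving system (X, μ, π), every nonnegative integrable function f ∈ L¹(X, μ), and every λ > 0, one has μ{x ∈ X : sup_{r>0} A_r f(x) > λ} ≤ C_n ‖f‖_{L¹(X, μ)} / λ, where A_r f(x) = |B(0, r)|⁻¹ ∫_{B(0, r)} f(π(v, x)) dv. -/
open MeasureTheory Metric
open scoped NNReal ENNReal

open Set Module

/-!
Calderón transference. Fix `x ∈ X` and `R > 0`, and let `E_R` be the set where some ball average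
of `f` along the orbit, with radius `r < R`, exceeds `λ`. Translating balls through the group law
`π (v + u) x = π v (π u x)`, the points `u ∈ B(0, R)` with `π u x ∈ E_R` are centres of balls
`B(u, r) ⊆ B(0, 2R)` on which the measure `f (π v x) dv` has density larger than `λ`; the Vitali
covering lemma bounds their Lebesgue measure by `4ⁿ λ⁻¹ ∫_{B(0,2R)} f (π v x) dv`. Integrating in
`x`, Fubini and the invariance of `μ` give `|B(0,R)| μ(E_R) ≤ 4ⁿ λ⁻¹ |B(0,2R)| ‖f‖₁`, that is
`μ(E_R) ≤ 8ⁿ ‖f‖₁ / λ`, and the superlevel set of the maximal function is the increasing union of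
the `E_R`.
-/

theorem exists_rat_mem_Ioo_lt_of_lt {F G : ℝ → ℝ≥0∞} {r R : ℝ}
    (hF : ContinuousWithinAt F (Ioi r) r) (hG : Monotone G) (hr : r < R) (h : F r < G r) :
    ∃ q : ℚ, (q : ℝ) ∈ Ioo r R ∧ F q < G q := by
  obtain ⟨ε, hε, hsub⟩ := mem_nhdsGT_iff_exists_Ioo_subset.1 (hF (Iio_mem_nhds h))
  obtain ⟨q, hrq, hq⟩ := exists_rat_btwn (lt_min hε hr)
  have hqε : (q : ℝ) ∈ Ioo r ε := ⟨hrq, hq.trans_le (min_le_left _ _)⟩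
  exact ⟨q, ⟨hrq, hq.trans_le (min_le_right _ _)⟩,
    (hsub hqε).trans_le (hG hrq.le)⟩

theorem continuousWithinAt_measure_closedBall {α : Type*} [PseudoMetricSpace α] [ProperSpace α]
    [MeasurableSpace α] [OpensMeasurableSpace α] (μ : Measure α) [IsFiniteMeasureOnCompacts μ]
    (x : α) (r : ℝ) : ContinuousWithinAt (fun s => μ (closedBall x s)) (Ioi r) r := by
  have := tendsto_measure_biInter_gt (μ := μ) (s := closedBall x) (a := r)
    (fun _ _ => measurableSet_closedBall.nullMeasurableSet)
    (fun _ _ _ hij => closedBall_subset_closedBall hij)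
    ⟨r + 1, by linarith, measure_closedBall_lt_top.ne⟩
  rwa [biInter_gt_closedBall] at this

theorem setLIntegral_closedBall_zero_comp_add_right {G : Type*} [NormedAddCommGroup G]
    [MeasurableSpace G] [MeasurableAdd G] (μ : Measure G) [μ.IsAddRightInvariant]
    (g : G → ℝ≥0∞) (u : G) (r : ℝ) :
    ∫⁻ v in closedBall 0 r, g (v + u) ∂μ = ∫⁻ v in closedBall u r, g v ∂μ := by
  have := (measurePreserving_add_right μ u).setLIntegral_comp_preimage_emb
    (measurableEmbedding_addRight u) g (closedBall u r)
  rwa [preimage_add_right_closedBall, sub_self] at this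

section Haar

variable {E : Type*} [NormedAddCommGroup E] [NormedSpace ℝ E] [MeasurableSpace E] [BorelSpace E]
  [FiniteDimensional ℝ E] (μ : Measure E) [μ.IsAddHaarMeasure]

theorem addHaar_closedBall_natCast_mul (x : E) {k : ℕ} (hk : k ≠ 0) (r : ℝ) :
    μ (closedBall x (k * r)) = k ^ finrank ℝ E * μ (closedBall x r) := by
  rw [Measure.addHaar_closedBall_mul_of_pos μ x (Nat.cast_pos.2 (Nat.pos_of_ne_zero hk)),
    ENNReal.ofReal_pow k.cast_nonneg, ENNReal.ofReal_natCast,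
    Measure.addHaar_closedBall_center μ x]

theorem mul_measure_le_of_forall_exists_closedBall (ν : Measure E) {T S : Set E} {c : ℝ≥0∞}
    {R : ℝ} (hT : ∀ u ∈ T, ∃ r ∈ Ioc 0 R, closedBall u r ⊆ S ∧
      c * μ (closedBall u r) < ν (closedBall u r)) :
    c * μ T ≤ 4 ^ finrank ℝ E * ν S := by
  choose! rad hrad hsub hlt using hT
  obtain ⟨U, hUT, hdisj, hcov⟩ := Vitali.exists_disjoint_subfamily_covering_enlargement_closedBall
    T id rad R (fun u hu => (hrad u hu).2) 4 (by norm_num)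
  simp only [id] at hdisj hcov
  have hU : U.Countable := hdisj.countable_of_nonempty_interior fun u hu =>
    ⟨u, mem_interior_iff_mem_nhds.2 (closedBall_mem_nhds u (hrad u (hUT hu)).1)⟩
  have hcover : T ⊆ ⋃ u ∈ U, closedBall u (4 * rad u) := fun a ha => by
    obtain ⟨b, hb, h⟩ := hcov a ha
    exact mem_biUnion hb (h (mem_closedBall_self (hrad a ha).1.le))
  calc c * μ T ≤ c * ∑' u : U, μ (closedBall u (4 * rad u)) := by
        gcongr
        exact (measure_mono hcover).trans (measure_biUnion_le _ hU _)
    _ = 4 ^ finrank ℝ E * ∑' u : U, c * μ (closedBall u (rad u)) := by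
        rw [← ENNReal.tsum_mul_left, ← ENNReal.tsum_mul_left]
        congr! 1 with u
        ext u
        rw [mul_left_comm]
        exact_mod_cast congrArg (c * ·) (addHaar_closedBall_natCast_mul μ (u : E) four_ne_zero _)
    _ ≤ 4 ^ finrank ℝ E * ∑' u : U, ν (closedBall u (rad u)) := by
        gcongr with u
        exact (hlt u (hUT u.2)).le
    _ = 4 ^ finrank ℝ E * ν (⋃ u ∈ U, closedBall u (rad u)) := by
        rw [measure_biUnion hU hdisj fun _ _ => measurableSet_closedBall]
    _ ≤ 4 ^ finrank ℝ E * ν S := by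
        gcongr
        exact iUnion₂_subset fun u hu => hsub u (hUT hu)

end Haar

section Action

variable {E X : Type*} [MeasurableSpace E] [MeasurableSpace X] {ν : Measure E} [SFinite ν]
  {μ : Measure X} {π : E → X → X}

theorem measurable_setLIntegral_comp_act (hπ : Measurable (Function.uncurry π))
    {g : X → ℝ≥0∞} (hg : Measurable g) (S : Set E) :
    Measurable fun x => ∫⁻ v in S, g (π v x) ∂ν :=
  (hg.comp (hπ.comp measurable_swap)).lintegral_prod_right'

theorem lintegral_setLIntegral_comp_act [SFinite μ] (hπ : Measurable (Function.uncurry π))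
    (hmp : ∀ v, MeasurePreserving (π v) μ μ) {g : X → ℝ≥0∞} (hg : Measurable g) (S : Set E) :
    ∫⁻ x, ∫⁻ v in S, g (π v x) ∂ν ∂μ = ν S * ∫⁻ x, g x ∂μ := by
  have hm : Measurable (Function.uncurry fun x v => g (π v x)) :=
    hg.comp (hπ.comp measurable_swap)
  rw [lintegral_lintegral_swap hm.aemeasurable]
  simp_rw [(hmp _).lintegral_comp hg]
  rw [setLIntegral_const, mul_comm]

end Action

section Maximal

variable {E : Type*} [NormedAddCommGroup E] [MeasurableSpace E] {ν : Measure E}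
  {X : Type*} {π : E → X → X}

/-- The bound `r < R` is strict so that `r` can be moved up to a rational radius, which makes the
set measurable. -/
def maximalSuperlevelSet (ν : Measure E) (π : E → X → X) (f : X → ℝ≥0∞) (c : ℝ≥0∞) (R : ℝ) :
    Set X :=
  {x | ∃ r ∈ Ioo 0 R, c * ν (closedBall 0 r) < ∫⁻ v in closedBall 0 r, f (π v x) ∂ν}

theorem monotone_maximalSuperlevelSet (f : X → ℝ≥0∞) (c : ℝ≥0∞) :
    Monotone (maximalSuperlevelSet ν π f c) := fun _ _ hRS _ ⟨r, hr, hlt⟩ =>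
  ⟨r, ⟨hr.1, hr.2.trans_le hRS⟩, hlt⟩

theorem setOf_lt_iSup_eq_iUnion_maximalSuperlevelSet [NormedSpace ℝ E] [FiniteDimensional ℝ E]
    [ν.IsAddHaarMeasure] (f : X → ℝ≥0∞) (c : ℝ≥0∞) :
    {x | c < ⨆ (r : ℝ) (_ : 0 < r),
        (ν (closedBall 0 r))⁻¹ * ∫⁻ v in closedBall 0 r, f (π v x) ∂ν} =
      ⋃ k : ℕ, maximalSuperlevelSet ν π f c k := by
  have hiff {r : ℝ} (hr : 0 < r) (I : ℝ≥0∞) :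
      c < (ν (closedBall 0 r))⁻¹ * I ↔ c * ν (closedBall 0 r) < I := by
    rw [mul_comm, ← div_eq_mul_inv, ENNReal.lt_div_iff_mul_lt
      (.inl (measure_closedBall_pos ν 0 hr).ne') (.inl measure_closedBall_lt_top.ne)]
  ext x
  simp only [maximalSuperlevelSet, mem_ofPred_eq, mem_iUnion, lt_iSup_iff]
  constructor
  · rintro ⟨r, hr, hlt⟩
    obtain ⟨k, hk⟩ := exists_nat_gt r
    exact ⟨k, r, ⟨hr, hk⟩, (hiff hr _).1 hlt⟩
  · rintro ⟨k, r, hr, hlt⟩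
    exact ⟨r, hr.1, (hiff hr.1 _).2 hlt⟩

variable [NormedSpace ℝ E] [BorelSpace E] [FiniteDimensional ℝ E] [ν.IsAddHaarMeasure]

theorem mul_setLIntegral_indicator_maximalSuperlevelSet_le
    (hπadd : ∀ u v x, π (u + v) x = π u (π v x)) (f : X → ℝ≥0∞) (c : ℝ≥0∞) (R : ℝ) (x : X) :
    c * ∫⁻ u in closedBall 0 R, (maximalSuperlevelSet ν π f c R).indicator 1 (π u x) ∂ν ≤
      4 ^ finrank ℝ E * ∫⁻ v in closedBall 0 (2 * R), f (π v x) ∂ν := by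
  set T := (π · x) ⁻¹' maximalSuperlevelSet ν π f c R ∩ closedBall 0 R
  have hT : ∀ u ∈ T, ∃ r ∈ Ioc 0 R, closedBall u r ⊆ closedBall 0 (2 * R) ∧
      c * ν (closedBall u r) < ν.withDensity (fun v => f (π v x)) (closedBall u r) := by
    rintro u ⟨⟨r, hr, hlt⟩, hu⟩
    refine ⟨r, ⟨hr.1, hr.2.le⟩, closedBall_subset_closedBall' ?_, ?_⟩
    · linarith [hr.2, mem_closedBall.1 hu]
    · rw [Measure.addHaar_closedBall_center, withDensity_apply _ measurableSet_closedBall,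
        ← setLIntegral_closedBall_zero_comp_add_right]
      simpa only [hπadd] using hlt
  calc c * ∫⁻ u in closedBall 0 R, (maximalSuperlevelSet ν π f c R).indicator 1 (π u x) ∂ν
      ≤ c * ν T := by
        simp_rw [← indicator_comp_right (fun u => π u x), Pi.one_comp]
        grw [lintegral_indicator_one_le, Measure.restrict_apply' measurableSet_closedBall]
    _ ≤ 4 ^ finrank ℝ E * ∫⁻ v in closedBall 0 (2 * R), f (π v x) ∂ν := by
        grw [mul_measure_le_of_forall_exists_closedBall ν _ hT,
          withDensity_apply _ measurableSet_closedBall]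

variable [MeasurableSpace X] {μ : Measure X}

theorem measurableSet_maximalSuperlevelSet (hπ : Measurable (Function.uncurry π))
    {f : X → ℝ≥0∞} (hf : Measurable f) {c : ℝ≥0∞} (hc : c ≠ ∞) (R : ℝ) :
    MeasurableSet (maximalSuperlevelSet ν π f c R) := by
  have hrat : maximalSuperlevelSet ν π f c R = ⋃ (q : ℚ) (_ : (q : ℝ) ∈ Ioo 0 R),
      {x | c * ν (closedBall 0 q) < ∫⁻ v in closedBall 0 q, f (π v x) ∂ν} := by
    ext x
    simp only [maximalSuperlevelSet, mem_ofPred_eq, mem_iUnion, exists_prop]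
    constructor
    · rintro ⟨r, hr, hlt⟩
      obtain ⟨q, hq, hqlt⟩ := exists_rat_mem_Ioo_lt_of_lt
        (G := fun s => ∫⁻ v in closedBall 0 s, f (π v x) ∂ν)
        (ENNReal.Tendsto.const_mul (continuousWithinAt_measure_closedBall ν 0 r) (Or.inr hc))
        (fun _ _ h => lintegral_mono_set (closedBall_subset_closedBall h)) hr.2 hlt
      exact ⟨q, ⟨hr.1.trans hq.1, hq.2⟩, hqlt⟩
    · rintro ⟨q, hq, hlt⟩
      exact ⟨q, hq, hlt⟩
  rw [hrat]
  exact .iUnion fun q => .iUnion fun _ =>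
    measurableSet_lt measurable_const (measurable_setLIntegral_comp_act hπ hf _)

theorem mul_measure_maximalSuperlevelSet_le [SFinite μ] (hπ : Measurable (Function.uncurry π))
    (hπadd : ∀ u v x, π (u + v) x = π u (π v x)) (hmp : ∀ v, MeasurePreserving (π v) μ μ)
    {f : X → ℝ≥0∞} (hf : Measurable f) {c : ℝ≥0∞} (hc : c ≠ ∞) (R : ℝ) :
    c * μ (maximalSuperlevelSet ν π f c R) ≤ 8 ^ finrank ℝ E * ∫⁻ x, f x ∂μ := by
  set A := maximalSuperlevelSet ν π f c R
  obtain hR | hR := le_or_gt R 0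
  · have hA : A = ∅ := eq_empty_of_forall_notMem fun x ⟨r, hr, _⟩ => hR.not_gt (hr.1.trans hr.2)
    simp [hA]
  have hA := measurableSet_maximalSuperlevelSet hπ hf hc R (ν := ν)
  have hball₀ := (measure_closedBall_pos ν (0 : E) hR).ne'
  have hball := (measure_closedBall_lt_top (μ := ν) (x := (0 : E)) (r := R)).ne
  refine (ENNReal.mul_le_mul_iff_right hball₀ hball).1 ?_
  calc ν (closedBall 0 R) * (c * μ A)
      = c * ∫⁻ x, ∫⁻ u in closedBall 0 R, A.indicator 1 (π u x) ∂ν ∂μ := by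
        rw [lintegral_setLIntegral_comp_act hπ hmp (measurable_one.indicator hA),
          lintegral_indicator_one hA, mul_left_comm]
    _ = ∫⁻ x, c * ∫⁻ u in closedBall 0 R, A.indicator 1 (π u x) ∂ν ∂μ :=
        (lintegral_const_mul' _ _ hc).symm
    _ ≤ ∫⁻ x, 4 ^ finrank ℝ E * ∫⁻ v in closedBall 0 (2 * R), f (π v x) ∂ν ∂μ :=
        lintegral_mono fun x => mul_setLIntegral_indicator_maximalSuperlevelSet_le hπadd f c R x
    _ = 4 ^ finrank ℝ E * (2 ^ finrank ℝ E * ν (closedBall 0 R) * ∫⁻ x, f x ∂μ) := by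
        rw [lintegral_const_mul' _ _ (by simp), lintegral_setLIntegral_comp_act hπ hmp hf]
        exact_mod_cast congrArg (fun t => 4 ^ finrank ℝ E * (t * ∫⁻ x, f x ∂μ))
          (addHaar_closedBall_natCast_mul ν (0 : E) two_ne_zero R)
    _ = ν (closedBall 0 R) * (8 ^ finrank ℝ E * ∫⁻ x, f x ∂μ) := by
        rw [show (8 : ℝ≥0∞) = 4 * 2 by norm_num, mul_pow]
        ring

end Maximal

theorem wiener_maximal_ergodic_weak11_general
    (n : ℕ) :
    ∃ C : ℝ≥0, 0 < C ∧
      ∀ (X : Type) (_ : MeasurableSpace X) (μ : Measure X), SigmaFinite μ →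
        ∀ π : EuclideanSpace ℝ (Fin n) → X → X,
          Measurable (fun q : EuclideanSpace ℝ (Fin n) × X => π q.1 q.2) →
          (∀ x, π 0 x = x) →
          (∀ u v x, π (u + v) x = π u (π v x)) →
          (∀ v, MeasurePreserving (π v) μ μ) →
          ∀ f : X → ℝ≥0∞, Measurable f → (∫⁻ x, f x ∂μ) < ∞ →
            ∀ lam : ℝ≥0, 0 < lam →
              μ {x : X | (lam : ℝ≥0∞) < ⨆ (r : ℝ) (_ : 0 < r),
                  (volume (closedBall (0 : EuclideanSpace ℝ (Fin n)) r))⁻¹ *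
                    ∫⁻ v in closedBall (0 : EuclideanSpace ℝ (Fin n)) r, f (π v x) ∂volume} ≤
                (C : ℝ≥0∞) * (∫⁻ x, f x ∂μ) / (lam : ℝ≥0∞) := by
  refine ⟨8 ^ n, pow_pos (by norm_num) n, ?_⟩
  intro X _ μ _ π hπ _ hπadd hmp f hf _ lam hlam
  have hmono : Monotone fun k : ℕ => maximalSuperlevelSet volume π f lam k :=
    (monotone_maximalSuperlevelSet f _).comp Nat.mono_cast
  rw [setOf_lt_iSup_eq_iUnion_maximalSuperlevelSet, hmono.measure_iUnion]
  refine iSup_le fun k => (ENNReal.le_div_iff_mul_le (.inl (by exact_mod_cast hlam.ne'))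
    (.inl ENNReal.coe_ne_top)).2 ?_
  rw [mul_comm]
  simpa [finrank_euclideanSpace] using
    mul_measure_maximalSuperlevelSet_le hπ hπadd hmp hf ENNReal.coe_ne_top (k : ℝ)

/-- **Wiener's maximal ergodic inequality (commutative case, weak type (1,1)).**
There is a constant `C = C_n` such that for every `ℝⁿ`-measure-preserving system
`(X, μ, π)`, every nonnegative integrable `f ∈ L¹(X,μ)` and every `λ > 0`,
`μ{ sup_{r>0} A_r f > λ } ≤ C ‖f‖₁ / λ`, where
`A_r f(x) = |B(0,r)|⁻¹ ∫_{B(0,r)} f(π(v,x)) dv`. -/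
theorem wiener_maximal_ergodic_weak11
    (n : ℕ) (hn : 1 ≤ n) :
    ∃ C : ℝ≥0, 0 < C ∧
      ∀ (X : Type) (_ : MeasurableSpace X) (μ : Measure X), SigmaFinite μ →
        ∀ π : EuclideanSpace ℝ (Fin n) → X → X,
          Measurable (fun q : EuclideanSpace ℝ (Fin n) × X => π q.1 q.2) →
          (∀ x, π 0 x = x) →
          (∀ u v x, π (u + v) x = π u (π v x)) →
          (∀ v, MeasurePreserving (π v) μ μ) →
          ∀ f : X → ℝ≥0∞, Measurable f → (∫⁻ x, f x ∂μ) < ∞ →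
            ∀ lam : ℝ≥0, 0 < lam →
              μ {x : X | (lam : ℝ≥0∞) < ⨆ (r : ℝ) (_ : 0 < r),
                  (volume (closedBall (0 : EuclideanSpace ℝ (Fin n)) r))⁻¹ *
                    ∫⁻ v in closedBall (0 : EuclideanSpace ℝ (Fin n)) r, f (π v x) ∂volume} ≤
                (C : ℝ≥0∞) * (∫⁻ x, f x ∂μ) / (lam : ℝ≥0∞) :=
  wiener_maximal_ergodic_weak11_general n
end
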